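/- arXiv:1610.03307 — 12 statements merged into one kernel-verified Lean document; each statement's English description precedes it below -/
import Mathlib

section
/- Let X be a complete metric space that is almost n-hyperconvex for some integer n ≥ 3. Then X is n-hyperconvex. -/
/-!
Start from a point that is `1/32`-close to all the balls. If `p` lies in all the balls enlarged
by `A / 32` except one ball `B(x j, r j + A)`, two applications of almost hyperconvexity, each
trading one ball for a ball around the current point, produce a point at distance at most `2 A`
from `p` with the same property for `3 A / 4`; this needs two balls other than `B(x j, r j)`,
hence `n ≥ 3`. The resulting sequence is Cauchy, and its limit lies in every ball.
-/

/-- A metric space `X` is `n`-hyperconvex if for every family of `n` closed balls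
`B(x i, r i)` with `d(x i, x j) ≤ r i + r j`, the intersection is nonempty. -/
def IsNHyperconvex (X : Type*) [MetricSpace X] (n : ℕ) : Prop :=
  ∀ (x : Fin n → X) (r : Fin n → ℝ), (∀ i, 0 ≤ r i) →
    (∀ i j, dist (x i) (x j) ≤ r i + r j) →
    (⋂ i, Metric.closedBall (x i) (r i)).Nonempty

/-- A metric space `X` is almost `n`-hyperconvex if for every such family of `n` closed
balls and every `ε > 0`, the intersection of the `ε`-enlarged balls is nonempty. -/
def IsAlmostNHyperconvex (X : Type*) [MetricSpace X] (n : ℕ) : Prop :=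
  ∀ (x : Fin n → X) (r : Fin n → ℝ), (∀ i, 0 ≤ r i) →
    (∀ i j, dist (x i) (x j) ≤ r i + r j) →
    ∀ ε > (0 : ℝ), (⋂ i, Metric.closedBall (x i) (r i + ε)).Nonempty

open Filter Metric Set Topology Function

theorem exists_tendsto_of_forall_exists_dist_le_geometric {X : Type*} [PseudoMetricSpace X]
    [CompleteSpace X] {P : ℕ → X → Prop} {C c : ℝ} (hc : c < 1)
    (hstep : ∀ k p, P k p → ∃ q, dist p q ≤ C * c ^ k ∧ P (k + 1) q) {p₀ : X} (h₀ : P 0 p₀) :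
    ∃ (u : ℕ → X) (a : X), (∀ k, P k (u k)) ∧ Tendsto u atTop (𝓝 a) := by
  choose! f hf using hstep
  let u : ℕ → X := fun k => Nat.rec (motive := fun _ => X) p₀ f k
  have hu : ∀ k, P k (u k) := by
    intro k
    induction k with
    | zero => exact h₀
    | succ k ih => exact (hf k _ ih).2
  obtain ⟨a, ha⟩ := cauchySeq_tendsto_of_complete <|
    cauchySeq_of_le_geometric c C hc fun k => (hf k _ (hu k)).1
  exact ⟨u, a, hu, ha⟩

section

variable {X : Type*} [MetricSpace X] {n : ℕ} {x : Fin n → X} {r : Fin n → ℝ}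

theorem IsAlmostNHyperconvex.exists_dist_le_of_update (h : IsAlmostNHyperconvex X n)
    (hr : ∀ i, 0 ≤ r i) (hxr : ∀ i j, dist (x i) (x j) ≤ r i + r j) (l : Fin n) {p : X} {ρ : ℝ}
    (hρ : 0 ≤ ρ) (hp : ∀ i ≠ l, dist p (x i) ≤ ρ + r i) {t : ℝ} (ht : 0 < t) :
    ∃ q, dist q p ≤ ρ + t ∧ ∀ i ≠ l, dist q (x i) ≤ r i + t := by
  have hr' : ∀ i, 0 ≤ update r l ρ i := by
    intro i
    rcases eq_or_ne i l with rfl | hi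
    · simpa using hρ
    · simpa [hi] using hr i
  have hxr' : ∀ i j, dist (update x l p i) (update x l p j) ≤ update r l ρ i + update r l ρ j := by
    intro i j
    by_cases hi : i = l <;> by_cases hj : j = l
    · subst hi hj
      simp only [update_self, dist_self]
      linarith
    · subst hi
      simpa [hj] using hp j hj
    · subst hj
      simpa [hi, dist_comm, add_comm] using hp i hi
    · simpa [hi, hj] using hxr i j
  obtain ⟨q, hq⟩ := h _ _ hr' hxr' t ht
  simp only [mem_iInter, mem_closedBall] at hq
  exact ⟨q, by simpa using hq l, fun i hi => by simpa [hi] using hq i⟩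

def IsApproxCenter (x : Fin n → X) (r : Fin n → ℝ) (A : ℝ) (p : X) : Prop :=
  ∃ j, dist p (x j) ≤ r j + A ∧ ∀ i ≠ j, dist p (x i) ≤ r i + A / 32

theorem IsApproxCenter.dist_le {A : ℝ} {p : X} (hp : IsApproxCenter x r A p) (hA : 0 ≤ A)
    (i : Fin n) : dist p (x i) ≤ r i + A := by
  obtain ⟨j, hpj, hpi⟩ := hp
  rcases eq_or_ne i j with rfl | hij
  · exact hpj
  · linarith [hpi i hij]

theorem IsAlmostNHyperconvex.exists_spread_excess (h : IsAlmostNHyperconvex X n)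
    (hr : ∀ i, 0 ≤ r i) (hxr : ∀ i j, dist (x i) (x j) ≤ r i + r j) {A : ℝ} (hA : 0 < A)
    {p : X} {j k : Fin n} (hkj : k ≠ j) (hpj : dist p (x j) ≤ r j + A)
    (hpi : ∀ i ≠ j, dist p (x i) ≤ r i + A / 32) :
    ∃ q, dist p q ≤ 33 * A / 64 ∧ (∀ i, dist q (x i) ≤ r i + 35 * A / 64) ∧
      ∀ i ≠ k, i ≠ j → dist q (x i) ≤ r i + A / 64 := by
  -- Enlarging ball `j` by `A / 2` keeps the family admissible when ball `k` is traded for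
  -- `B(p, A / 2)`: the excess at `j` is halved, at the price of an excess `35 A / 64` at `k`.
  set r' := update r j (r j + A / 2)
  have hrr' : ∀ i, r i ≤ r' i := by
    intro i
    rcases eq_or_ne i j with rfl | hi
    · simp only [r', update_self]
      linarith
    · simp only [r', update_of_ne hi, le_refl]
  have hp_r' : ∀ i ≠ k, dist p (x i) ≤ A / 2 + r' i := by
    intro i hik
    rcases eq_or_ne i j with rfl | hij
    · simp only [r', update_self]
      linarith
    · simp only [r', update_of_ne hij]
      linarith [hpi i hij]
  obtain ⟨q, hqp, hq⟩ := h.exists_dist_le_of_update (fun i => (hr i).trans (hrr' i))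
    (fun i i' => (hxr i i').trans (add_le_add (hrr' i) (hrr' i'))) k (by positivity) hp_r'
    (t := A / 64) (by positivity)
  refine ⟨q, by rw [dist_comm]; linarith, fun i => ?_, fun i hik hij => ?_⟩
  · rcases eq_or_ne i k with rfl | hik
    · linarith [dist_triangle q p (x i), hpi i hkj]
    · have := hq i hik
      rcases eq_or_ne i j with rfl | hij
      · simp only [r', update_self] at this
        linarith
      · simp only [r', update_of_ne hij] at this
        linarith
  · simpa [r', hij] using hq i hik

theorem IsAlmostNHyperconvex.exists_isApproxCenter_mul (h : IsAlmostNHyperconvex X n)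
    (hn : 3 ≤ n) (hr : ∀ i, 0 ≤ r i) (hxr : ∀ i j, dist (x i) (x j) ≤ r i + r j) {A : ℝ}
    (hA : 0 < A) {p : X} (hp : IsApproxCenter x r A p) :
    ∃ q, dist p q ≤ 2 * A ∧ IsApproxCenter x r (A * (3 / 4)) q := by
  obtain ⟨j, hpj, hpi⟩ := hp
  obtain ⟨k, hkj, -⟩ := Fin.exists_ne_and_ne_of_two_lt j j (by omega)
  obtain ⟨l, hlj, hlk⟩ := Fin.exists_ne_and_ne_of_two_lt j k (by omega)
  obtain ⟨q₁, hpq₁, hq₁, hq₁_off⟩ := h.exists_spread_excess hr hxr hA hkj hpj hpi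
  -- Trading ball `l` for `B(q₁, 35 A / 64)` leaves an excess only at `l`.
  obtain ⟨q₂, hq₂q₁, hq₂⟩ := h.exists_dist_le_of_update hr hxr l (p := q₁) (ρ := 35 * A / 64)
    (by positivity) (fun i _ => by linarith [hq₁ i]) (t := A / 64) (by positivity)
  refine ⟨q₂, ?_, l, ?_, fun i hil => (hq₂ i hil).trans (by linarith)⟩
  · linarith [dist_triangle p q₁ q₂, dist_comm q₂ q₁]
  · linarith [dist_triangle q₂ q₁ (x l), hq₁_off l hlk hlj]

end

theorem isNHyperconvex_of_isAlmostNHyperconvex (X : Type*) [MetricSpace X] [CompleteSpace X]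
    (n : ℕ) (hn : 3 ≤ n) (h : IsAlmostNHyperconvex X n) : IsNHyperconvex X n := by
  intro x r hr hxr
  obtain ⟨p₀, hp₀⟩ := h x r hr hxr (1 / 32) (by norm_num)
  simp only [mem_iInter, mem_closedBall] at hp₀
  have h₀ : IsApproxCenter x r ((3 / 4) ^ 0) p₀ :=
    ⟨⟨0, by omega⟩, by linarith [hp₀ ⟨0, by omega⟩], fun i _ => by simpa using hp₀ i⟩
  obtain ⟨u, a, hu, hua⟩ := exists_tendsto_of_forall_exists_dist_le_geometric
    (P := fun k => IsApproxCenter x r ((3 / 4) ^ k)) (C := 2) (by norm_num)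
    (fun k p hp => pow_succ (3 / 4 : ℝ) k ▸ h.exists_isApproxCenter_mul hn hr hxr
      (by positivity) hp) h₀
  refine ⟨a, mem_iInter.2 fun i => mem_closedBall.2 ?_⟩
  have hbound : Tendsto (fun k => r i + (3 / 4 : ℝ) ^ k) atTop (𝓝 (r i)) := by
    simpa using tendsto_const_nhds.add
      (tendsto_pow_atTop_nhds_zero_of_lt_one (by norm_num : (0 : ℝ) ≤ 3 / 4) (by norm_num))
  exact le_of_tendsto_of_tendsto' (hua.dist tendsto_const_nhds) hbound
    fun k => (hu k).dist_le (by positivity) i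
end

section
/- Let X be a complete metric space. Then X is 4-hyperconvex if and only if X is n-hyperconvex for every positive integer n. -/
/-!
Say that `p` has slack `s` with respect to admissible balls `B(x i, r i)` if
`dist p (x i) ≤ r i + s i` for all `i`. Given `n + 1` balls and `n`-hyperconvexity, intersecting
`B(p, t)` with the balls `B(x i, r i + max (s i - t) 0)` for all but two indices moves `p` by at
most `t`, lowers all slacks but two by `t` and raises the remaining two by `t`. When there are at
least five balls, five such moves with `t = τ`, excluding in turn the pairs `{0,1}`, `{2,3}`,
`{4,0}`, `{1,2}`, `{3,4}`, take every slack from `2τ` down to `τ` while moving the point by at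
most `5τ` (with four balls a move never changes the total slack). Iterating with `τ` halved each
time gives a Cauchy sequence, whose limit lies in every ball.
-/

open Metric

section

variable {X : Type*} [MetricSpace X]

theorem radius_nonneg_of_dist_le {ι : Type*} {x : ι → X} {r : ι → ℝ}
    (hxx : ∀ i j, dist (x i) (x j) ≤ r i + r j) (i : ι) : 0 ≤ r i := by
  linarith [hxx i i, dist_self (x i)]

theorem IsNHyperconvex.iInter_closedBall_nonempty {n : ℕ} (h : IsNHyperconvex X n)
    {ι : Type*} [Fintype ι] [Nonempty ι] (hcard : Fintype.card ι ≤ n)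
    (x : ι → X) (r : ι → ℝ) (hxx : ∀ i j, dist (x i) (x j) ≤ r i + r j) :
    (⋂ i, closedBall (x i) (r i)).Nonempty := by
  obtain ⟨e⟩ : Nonempty (ι ↪ Fin n) :=
    Function.Embedding.nonempty_of_card_le (by simpa using hcard)
  rw [← (Function.invFun_surjective e.injective).iInter_comp]
  exact h _ _ (fun _ => radius_nonneg_of_dist_le hxx _) (fun _ _ => hxx _ _)

theorem IsNHyperconvex.mono {n k : ℕ} (h : IsNHyperconvex X n) (hk : 0 < k) (hkn : k ≤ n) :
    IsNHyperconvex X k :=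
  have : Nonempty (Fin k) := ⟨⟨0, hk⟩⟩
  fun x r _ hxx => h.iInter_closedBall_nonempty (by simpa using hkn) x r hxx

theorem IsNHyperconvex.exists_move {n : ℕ} (h : IsNHyperconvex X n)
    {ι : Type*} [Fintype ι] [DecidableEq ι] (hcard : Fintype.card ι ≤ n + 1)
    {x : ι → X} {r : ι → ℝ} (hxx : ∀ i j, dist (x i) (x j) ≤ r i + r j)
    {t : ℝ} (ht : 0 ≤ t) (j k : ι) (hjk : j ≠ k) {s s' : ι → ℝ} {p : X}
    (hp : ∀ i, dist p (x i) ≤ r i + s i) (hs' : ∀ i, 0 ≤ s' i)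
    (hs : ∀ i, s i + (if i = j ∨ i = k then t else -t) ≤ s' i) :
    ∃ q, dist p q ≤ t ∧ ∀ i, dist q (x i) ≤ r i + s' i := by
  let S := {i // ¬(i = j ∨ i = k)}
  have hS : Fintype.card (Option S) ≤ n := by
    have hpair := Fintype.card_subtype_eq_or_eq_of_ne hjk
    rw [Fintype.card_option, Fintype.card_subtype_compl, hpair]
    have := hpair ▸ Fintype.card_subtype_le fun i => i = j ∨ i = k
    omega
  have hs_S : ∀ i : S, s i ≤ t + s' i := fun i => by
    have := hs i; rw [if_neg i.2] at this; linarith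
  obtain ⟨q, hq⟩ := h.iInter_closedBall_nonempty hS
    (fun o => o.elim p (fun i => x i)) (fun o => o.elim t (fun i => r i + s' i))
    (by
      rintro (_ | i) (_ | i') <;> simp only [Option.elim_none, Option.elim_some, dist_self]
      · linarith
      · linarith [hp i', hs_S i']
      · rw [dist_comm]; linarith [hp i, hs_S i]
      · linarith [hxx i i', hs' i, hs' i'])
  simp only [Set.mem_iInter, mem_closedBall, Option.forall, Option.elim_none,
    Option.elim_some] at hq
  refine ⟨q, dist_comm p q ▸ hq.1, fun i => ?_⟩
  by_cases hi : i = j ∨ i = k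
  · have := hs i; rw [if_pos hi] at this
    linarith [dist_triangle q p (x i), hq.1, hp i]
  · exact hq.2 ⟨i, hi⟩

theorem IsNHyperconvex.exists_halve_slack {n : ℕ} (h : IsNHyperconvex X n) (hn : 4 ≤ n)
    {x : Fin (n + 1) → X} {r : Fin (n + 1) → ℝ}
    (hxx : ∀ i j, dist (x i) (x j) ≤ r i + r j) {τ : ℝ} (hτ : 0 ≤ τ) {p : X}
    (hp : ∀ i, dist p (x i) ≤ r i + 2 * τ) :
    ∃ q, dist p q ≤ 5 * τ ∧ ∀ i, dist q (x i) ≤ r i + τ := by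
  have move := h.exists_move (by simp) hxx hτ
  let c : ℕ → Fin (n + 1) := fun a => ⟨min a 4, by omega⟩
  obtain ⟨q₁, d₁, h₁⟩ := move (c 0) (c 1) (by simp [c, Fin.ext_iff])
    (s' := fun i => if i.val ≤ 1 then 3 * τ else τ) hp
    (fun i => by split_ifs <;> linarith)
    (fun i => by simp only [c, Fin.ext_iff]; split_ifs <;> first | linarith | omega)
  obtain ⟨q₂, d₂, h₂⟩ := move (c 2) (c 3) (by simp [c, Fin.ext_iff])
    (s' := fun i => if i.val ≤ 3 then 2 * τ else 0) h₁
    (fun i => by split_ifs <;> linarith)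
    (fun i => by simp only [c, Fin.ext_iff]; split_ifs <;> first | linarith | omega)
  obtain ⟨q₃, d₃, h₃⟩ := move (c 4) (c 0) (by simp [c, Fin.ext_iff])
    (s' := fun i => if i.val = 0 then 3 * τ else if i.val ≤ 4 then τ else 0) h₂
    (fun i => by split_ifs <;> linarith)
    (fun i => by simp only [c, Fin.ext_iff]; split_ifs <;> first | linarith | omega)
  obtain ⟨q₄, d₄, h₄⟩ := move (c 1) (c 2) (by simp [c, Fin.ext_iff])
    (s' := fun i => if i.val ≤ 2 then 2 * τ else 0) h₃
    (fun i => by split_ifs <;> linarith)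
    (fun i => by simp only [c, Fin.ext_iff]; split_ifs <;> first | linarith | omega)
  obtain ⟨q₅, d₅, h₅⟩ := move (c 3) (c 4) (by simp [c, Fin.ext_iff])
    (s' := fun i => if i.val ≤ 4 then τ else 0) h₄
    (fun i => by split_ifs <;> linarith)
    (fun i => by simp only [c, Fin.ext_iff]; split_ifs <;> first | linarith | omega)
  refine ⟨q₅, ?_, fun i => (h₅ i).trans ?_⟩
  · linarith [dist_triangle4 p q₁ q₂ q₅, dist_triangle4 q₂ q₃ q₄ q₅]
  · split_ifs <;> linarith

theorem iInter_closedBall_nonempty_of_halve_slack [CompleteSpace X] {ι : Type*}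
    {x : ι → X} {r : ι → ℝ} {C : ℝ}
    (halve : ∀ τ, 0 ≤ τ → ∀ p, (∀ i, dist p (x i) ≤ r i + 2 * τ) →
      ∃ q, dist p q ≤ C * τ ∧ ∀ i, dist q (x i) ≤ r i + τ)
    {σ : ℝ} (hσ : 0 ≤ σ) {p₀ : X} (hp₀ : ∀ i, dist p₀ (x i) ≤ r i + σ) :
    (⋂ i, closedBall (x i) (r i)).Nonempty := by
  have step : ∀ (k : ℕ) p, (∀ i, dist p (x i) ≤ r i + σ / 2 ^ k) → ∃ q,
      dist p q ≤ C * σ / 2 / 2 ^ k ∧ ∀ i, dist q (x i) ≤ r i + σ / 2 ^ (k + 1) := by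
    intro k p hp
    have h2τ : 2 * (σ / 2 ^ (k + 1)) = σ / 2 ^ k := by rw [pow_succ]; field_simp
    obtain ⟨q, hpq, hq⟩ := halve _ (by positivity) p (h2τ ▸ hp)
    refine ⟨q, hpq.trans_eq ?_, hq⟩
    rw [pow_succ]; field_simp
  choose! f hf_dist hf_slack using step
  let u : ℕ → X := fun k => Nat.rec p₀ f k
  have hu : ∀ k i, dist (u k) (x i) ≤ r i + σ / 2 ^ k := by
    intro k
    induction k with
    | zero => simpa [u] using hp₀
    | succ k ih => exact hf_slack k (u k) ih
  obtain ⟨q, hq⟩ := cauchySeq_tendsto_of_complete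
    (cauchySeq_of_le_geometric_two fun k => hf_dist k (u k) (hu k))
  refine ⟨q, Set.mem_iInter.2 fun i => mem_closedBall.2 ?_⟩
  have hσk : Filter.Tendsto (fun k : ℕ => r i + σ / 2 ^ k) Filter.atTop (nhds (r i)) := by
    simpa using (tendsto_const_nhds (x := r i)).add
      ((tendsto_const_nhds (x := σ)).div_atTop (tendsto_pow_atTop_atTop_of_one_lt one_lt_two))
  exact le_of_tendsto_of_tendsto' (hq.dist tendsto_const_nhds) hσk fun k => hu k i

theorem IsNHyperconvex.succ [CompleteSpace X] {n : ℕ} (h : IsNHyperconvex X n) (hn : 4 ≤ n) :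
    IsNHyperconvex X (n + 1) := fun _ _ hr hxx =>
  iInter_closedBall_nonempty_of_halve_slack (fun _ hτ _ hp => h.exists_halve_slack hn hxx hτ hp)
    (hr 0) fun i => (hxx 0 i).trans_eq (add_comm _ _)

end

theorem isNHyperconvex_four_iff_forall (X : Type*) [MetricSpace X] [CompleteSpace X] :
    IsNHyperconvex X 4 ↔ ∀ n : ℕ, 0 < n → IsNHyperconvex X n := by
  refine ⟨fun h4 n hn => ?_, fun h => h 4 (by norm_num)⟩
  rcases le_total n 4 with hle | hge
  · exact h4.mono hn hle
  · induction n, hge using Nat.le_induction with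
    | base => exact h4
    | succ m hm ih => exact (ih (by omega)).succ hm
end

section
/- Let X be a complete metric space and let A ⊂ X be a nonempty subset. Then A is externally 4-hyperconvex in X if and only if A is externally n-hyperconvex in X for every positive integer n. -/
/-!
For `n ≥ 4`, `n`-hyperconvexity of `A` already gives `(n + 1)`-hyperconvexity. Given `n + 1`
admissible balls and a point `a ∈ A`, applying `n`-hyperconvexity to `n - 1` of the balls,
enlarged by their excess over `ρ`, together with the ball `B(a, ρ)`, moves `a` by at most `ρ`
inside `A` so that its excess over those balls drops by `ρ`, while its excess over the two
remaining balls grows by at most `ρ`. Starting from a point whose excess `s` is carried by two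
balls, four such moves of size `s / 2`, routed through three further balls, yield a point whose
excess `s / 2` is again carried by two balls. Iterating gives a Cauchy sequence in `A`; its
limit lies in `A`, which is closed, and in every ball.
-/

/-- A subset `A` of a metric space `X` is externally `n`-hyperconvex in `X` if for every
family of `n` closed balls `B(x i, r i)` with `d(x i, A) ≤ r i` and
`d(x i, x j) ≤ r i + r j`, the intersection `A ∩ ⋂ i, B(x i, r i)` is nonempty. -/
def IsExternallyNHyperconvex {X : Type*} [MetricSpace X] (A : Set X) (n : ℕ) : Prop :=
  ∀ (x : Fin n → X) (r : Fin n → ℝ),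
    (∀ i, Metric.infDist (x i) A ≤ r i) →
    (∀ i j, dist (x i) (x j) ≤ r i + r j) →
    (A ∩ ⋂ i, Metric.closedBall (x i) (r i)).Nonempty

open Filter Topology Metric Finset

theorem exists_tendsto_of_forall_exists_dist_le {X : Type*} [MetricSpace X] [CompleteSpace X]
    {P : ℕ → X → Prop} {a₀ : X} (h₀ : P 0 a₀) {C : ℝ}
    (hstep : ∀ k a, P k a → ∃ b, P (k + 1) b ∧ dist a b ≤ C / 2 ^ k) :
    ∃ u : ℕ → X, (∀ k, P k (u k)) ∧ ∃ y, Tendsto u atTop (𝓝 y) := by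
  choose! next hnext hdist using hstep
  let u : ℕ → X := fun k => Nat.rec a₀ next k
  have hu : ∀ k, P k (u k) := fun k => by
    induction k with
    | zero => exact h₀
    | succ k ih => exact hnext k _ ih
  refine ⟨u, hu, cauchySeq_tendsto_of_complete (cauchySeq_of_le_geometric_two (C := 2 * C) ?_)⟩
  intro k
  rw [mul_div_cancel_left₀ C two_ne_zero]
  exact hdist k _ (hu k)

namespace IsExternallyNHyperconvex

variable {X : Type*} [MetricSpace X] {A : Set X} {n : ℕ} {ι : Type*}

theorem nonempty_inter_of_card_le (h : IsExternallyNHyperconvex A n) [Fintype ι] [Nonempty ι]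
    (hι : Fintype.card ι ≤ n) (x : ι → X) (r : ι → ℝ) (hr : ∀ i, infDist (x i) A ≤ r i)
    (hx : ∀ i j, dist (x i) (x j) ≤ r i + r j) :
    (A ∩ ⋂ i, closedBall (x i) (r i)).Nonempty := by
  obtain ⟨f, hf⟩ : ∃ f : Fin n → ι, f.Surjective :=
    ⟨_, Function.invFun_surjective <|
      (Fin.castLEEmb hι).injective.comp (Fintype.equivFin ι).injective⟩
  rw [← hf.iInter_comp]
  exact h (x ∘ f) (r ∘ f) (fun j => hr _) (fun j k => hx _ _)

theorem mono {m : ℕ} (h : IsExternallyNHyperconvex A n) (hm : 0 < m) (hmn : m ≤ n) :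
    IsExternallyNHyperconvex A m :=
  have : Nonempty (Fin m) := ⟨⟨0, hm⟩⟩
  h.nonempty_inter_of_card_le (by simpa using hmn)

theorem isClosed (h : IsExternallyNHyperconvex A n) (hn : 0 < n) : IsClosed A := by
  refine isClosed_of_closure_subset fun y hy => ?_
  have hy₀ : infDist y A = 0 := by rw [← infDist_closure, infDist_zero_of_mem hy]
  obtain ⟨a, ha, hay⟩ := h.nonempty_inter_of_card_le (ι := Unit) (by rwa [Fintype.card_unit])
    (fun _ => y) (fun _ => 0) (fun _ => hy₀.le) (fun _ _ => by simp)
  rwa [← dist_le_zero.1 (by simpa using hay : dist a y ≤ 0)]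

section Family

variable (h : IsExternallyNHyperconvex A n) {x : ι → X} {r : ι → ℝ}
  (hr : ∀ i, infDist (x i) A ≤ r i) (hx : ∀ i j, dist (x i) (x j) ≤ r i + r j)
include h hr hx

theorem exists_mem_dist_le_of_card_lt {C : Finset ι} (hC : #C < n) {a : X} (ha : a ∈ A)
    {ρ : ℝ} (hρ : 0 ≤ ρ) {e : ι → ℝ} (he : ∀ i ∈ C, 0 ≤ e i)
    (hae : ∀ i ∈ C, dist a (x i) ≤ ρ + (r i + e i)) :
    ∃ b ∈ A, dist b a ≤ ρ ∧ ∀ i ∈ C, dist b (x i) ≤ r i + e i := by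
  obtain ⟨b, hb, hbx⟩ := h.nonempty_inter_of_card_le (ι := Option C) (by simpa using hC)
    (fun o => o.elim a fun i => x i) (fun o => o.elim ρ fun i => r i + e i)
    (by
      rintro (_ | i)
      · simpa [infDist_zero_of_mem ha] using hρ
      · exact (hr i).trans (le_add_of_nonneg_right (he i i.2)))
    (by
      rintro (_ | i) (_ | j)
      · simpa using hρ
      · exact hae j j.2
      · simpa [dist_comm, add_comm] using hae i i.2
      · simp only [Option.elim]
        linarith [hx i j, he i i.2, he j j.2])
  simp only [Set.mem_iInter, mem_closedBall, Option.forall] at hbx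
  exact ⟨b, hb, hbx.1, fun i hi => hbx.2 ⟨i, hi⟩⟩

theorem exists_mem_dist_le_of_card_le_succ [Fintype ι] (hι : Fintype.card ι ≤ n + 1)
    {a : X} (ha : a ∈ A) {ρ : ℝ} (hρ : 0 ≤ ρ) {e e' : ι → ℝ}
    (hae : ∀ i, dist a (x i) ≤ r i + e i) {y z : ι} (hyz : y ≠ z) (he' : ∀ i, 0 ≤ e' i)
    (hee' : ∀ i, e i ≤ ρ + e' i) (hy : e y + ρ ≤ e' y) (hz : e z + ρ ≤ e' z) :
    ∃ b ∈ A, dist b a ≤ ρ ∧ ∀ i, dist b (x i) ≤ r i + e' i := by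
  classical
  have hyzι := card_le_univ ({y, z} : Finset ι)
  rw [card_pair hyz] at hyzι
  obtain ⟨b, hb, hba, hbx⟩ := h.exists_mem_dist_le_of_card_lt hr hx (C := {y, z}ᶜ)
    (by rw [card_compl, card_pair hyz]; omega) ha hρ (fun i _ => he' i)
    (fun i _ => by linarith [hae i, hee' i])
  refine ⟨b, hb, hba, fun i => ?_⟩
  by_cases hi : i ∈ ({y, z} : Finset ι)ᶜ
  · exact hbx i hi
  · have hyz' : e i + ρ ≤ e' i := by
      simp only [mem_compl, mem_insert, mem_singleton, not_not] at hi
      rcases hi with rfl | rfl <;> assumption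
    linarith [dist_triangle b a (x i), hae i]

theorem exists_pair_excess_half [Fintype ι] [DecidableEq ι] (hι : Fintype.card ι ≤ n + 1)
    (h₅ : 5 ≤ Fintype.card ι) {p q : ι} (hpq : p ≠ q) {s : ℝ} (hs : 0 ≤ s) {a : X} (ha : a ∈ A)
    (has : ∀ i, dist a (x i) ≤ r i + if i = p ∨ i = q then s else 0) :
    ∃ b ∈ A, dist b a ≤ 2 * s ∧
      ∃ u v, u ≠ v ∧ ∀ i, dist b (x i) ≤ r i + if i = u ∨ i = v then s / 2 else 0 := by
  obtain ⟨u, hu, v, hv, w, hw, huv, huw, hvw⟩ := two_lt_card.1 <|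
    show 2 < #({p, q}ᶜ : Finset ι) by rw [card_compl, card_pair hpq]; omega
  simp only [mem_compl, mem_insert, mem_singleton, not_or] at hu hv hw
  have hs₂ : 0 ≤ s / 2 := by linarith
  obtain ⟨b₁, hb₁, hb₁a, hb₁x⟩ := h.exists_mem_dist_le_of_card_le_succ hr hx hι ha hs₂ has huw
    (e' := fun i => if i = p ∨ i = q ∨ i = u ∨ i = w then s / 2 else 0)
    (by grind) (by grind) (by grind) (by grind)
  obtain ⟨b₂, hb₂, hb₂b₁, hb₂x⟩ := h.exists_mem_dist_le_of_card_le_succ hr hx hι hb₁ hs₂ hb₁x hvw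
    (e' := fun i => if i = v then s / 2 else if i = w then s else 0)
    (by grind) (by grind) (by grind) (by grind)
  obtain ⟨b₃, hb₃, hb₃b₂, hb₃x⟩ := h.exists_mem_dist_le_of_card_le_succ hr hx hι hb₂ hs₂ hb₂x hpq
    (e' := fun i => if i = p ∨ i = q ∨ i = w then s / 2 else 0)
    (by grind) (by grind) (by grind) (by grind)
  obtain ⟨b₄, hb₄, hb₄b₃, hb₄x⟩ := h.exists_mem_dist_le_of_card_le_succ hr hx hι hb₃ hs₂ hb₃x huv
    (e' := fun i => if i = u ∨ i = v then s / 2 else 0)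
    (by grind) (by grind) (by grind) (by grind)
  refine ⟨b₄, hb₄, ?_, u, v, huv, hb₄x⟩
  linarith [dist_triangle4 b₄ b₃ b₂ b₁, dist_triangle b₄ b₁ a]

theorem exists_pair_excess [Fintype ι] [DecidableEq ι]
    (hι : Fintype.card ι ≤ n + 1) {y z : ι} (hyz : y ≠ z) {a : X} (ha : a ∈ A) :
    ∃ b ∈ A, ∃ s, 0 ≤ s ∧ ∀ i, dist b (x i) ≤ r i + if i = y ∨ i = z then s else 0 := by
  set ρ := ∑ i, dist a (x i)
  have hρ : 0 ≤ ρ := sum_nonneg fun i _ => dist_nonneg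
  have haρ : ∀ i, dist a (x i) ≤ r i + ρ := fun i => by
    linarith [infDist_nonneg.trans (hr i),
      single_le_sum (f := fun i => dist a (x i)) (fun i _ => dist_nonneg) (mem_univ i)]
  obtain ⟨b, hb, -, hbx⟩ := h.exists_mem_dist_le_of_card_le_succ hr hx hι ha hρ haρ hyz
    (e' := fun i => if i = y ∨ i = z then 2 * ρ else 0) (by grind) (by grind) (by grind) (by grind)
  exact ⟨b, hb, 2 * ρ, by positivity, hbx⟩

end Family

theorem succ [CompleteSpace X] (h : IsExternallyNHyperconvex A n) (hn : 4 ≤ n) :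
    IsExternallyNHyperconvex A (n + 1) := by
  intro x r hr hx
  obtain ⟨a, ha, -⟩ := h.nonempty_inter_of_card_le (ι := Unit) (by rw [Fintype.card_unit]; omega)
    (fun _ => x 0) (fun _ => r 0) (fun _ => hr 0) (fun _ _ => by simp [infDist_nonneg.trans (hr 0)])
  obtain ⟨b₀, hb₀, s, hs, hb₀x⟩ :=
    h.exists_pair_excess hr hx (by simp) (y := 0) (z := 1) (by simp; omega) ha
  obtain ⟨u, hu, y, hy⟩ := exists_tendsto_of_forall_exists_dist_le (C := 2 * s)
    (P := fun k b => b ∈ A ∧ ∃ p q, p ≠ q ∧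
      ∀ i, dist b (x i) ≤ r i + if i = p ∨ i = q then s / 2 ^ k else 0)
    ⟨hb₀, 0, 1, by simp; omega, by simpa using hb₀x⟩ <| by
      rintro k b ⟨hb, p, q, hpq, hbx⟩
      obtain ⟨c, hc, hcb, u, v, huv, hcx⟩ :=
        h.exists_pair_excess_half hr hx (by simp) (by simp; omega) hpq (by positivity) hb hbx
      refine ⟨c, ⟨hc, u, v, huv, by simpa only [div_div, ← pow_succ] using hcx⟩, ?_⟩
      rw [dist_comm]
      exact hcb.trans_eq (by ring)
  have hyA : y ∈ A := (h.isClosed (by omega)).mem_of_tendsto hy (.of_forall fun k => (hu k).1)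
  refine ⟨y, hyA, Set.mem_iInter.2 fun i => mem_closedBall.2 ?_⟩
  have hlim : Tendsto (fun k : ℕ => r i + s / 2 ^ k) atTop (𝓝 (r i)) := by
    simpa using tendsto_const_nhds.add <| (tendsto_const_nhds (x := s)).div_atTop
      (tendsto_pow_atTop_atTop_of_one_lt (one_lt_two (α := ℝ)))
  refine le_of_tendsto_of_tendsto' (hy.dist tendsto_const_nhds) hlim fun k => ?_
  obtain ⟨-, p, q, -, hux⟩ := hu k
  have := hux i
  split_ifs at this <;> linarith [show (0 : ℝ) ≤ s / 2 ^ k by positivity]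

end IsExternallyNHyperconvex

theorem isExternallyNHyperconvex_four_iff_forall_general (X : Type*) [MetricSpace X] [CompleteSpace X]
    (A : Set X) :
    IsExternallyNHyperconvex A 4 ↔ ∀ n : ℕ, 0 < n → IsExternallyNHyperconvex A n := by
  refine ⟨fun h₄ n hn => ?_, fun h => h 4 (by norm_num)⟩
  rcases le_total n 4 with hn₄ | h₄n
  · exact h₄.mono hn hn₄
  · exact Nat.le_induction h₄ (fun m hm hm' => hm'.succ hm) n h₄n

theorem isExternallyNHyperconvex_four_iff_forall (X : Type*) [MetricSpace X] [CompleteSpace X]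
    (A : Set X) (hA : A.Nonempty) :
    IsExternallyNHyperconvex A 4 ↔ ∀ n : ℕ, 0 < n → IsExternallyNHyperconvex A n :=
  isExternallyNHyperconvex_four_iff_forall_general X A
end

section
/- Let X be a complete metric space and let A ⊂ X be a nonempty subset. Then A is weakly externally 4-hyperconvex in X if and only if A is weakly externally n-hyperconvex in X for every positive integer n. -/
/-- A subset `A` of a metric space `X` is weakly externally `n`-hyperconvex in `X` if for
every `x ∈ X`, every `r ≥ d(x,A)`, and every family of `n - 1` closed balls
`B(y i, s i)` with `y i ∈ A`, `d(x, y i) ≤ r + s i` and `d(y i, y j) ≤ s i + s j`,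
the intersection `A ∩ B(x,r) ∩ ⋂ i, B(y i, s i)` is nonempty. -/
def IsWeaklyExternallyNHyperconvex {X : Type*} [MetricSpace X] (A : Set X) (n : ℕ) : Prop :=
  ∀ (x : X) (r : ℝ), Metric.infDist x A ≤ r →
    ∀ (y : Fin (n - 1) → X) (s : Fin (n - 1) → ℝ),
      (∀ i, y i ∈ A) →
      (∀ i, dist x (y i) ≤ r + s i) →
      (∀ i j, dist (y i) (y j) ≤ s i + s j) →
      ((A ∩ Metric.closedBall x r) ∩ ⋂ i, Metric.closedBall (y i) (s i)).Nonempty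

/-!
Call a family of balls admissible if `d(cᵢ, cⱼ) ≤ ρᵢ + ρⱼ`, every center lies within its radius
of `A`, and at most one center lies outside `A`. Weak external `n`-hyperconvexity says that any
`n` such balls meet in `A`; in this form it is monotone in `n` and already forces `A` to be closed.

To pass from `k ≥ 4` to `k + 1` balls, start from `z ∈ A` with `d(z, cᵢ) ≤ ρᵢ + E` for all `i`.
Applying `k`-hyperconvexity to `B(z, h)` together with all balls but those of a pair `{a, b}`
moves `z` by at most `h`, lowers every excess outside the pair by `h` and raises the two others
by `h`. Doing this along the `k + 1` pairs `(i, σ i)` of a fixed-point-free permutation with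
`h = E / 3` lowers each excess at least `k - 1 ≥ 3` times and raises it at most twice, so the
excess drops to `2E/3` while `z` moves by at most `(k + 1) E`. The resulting Cauchy sequence
converges in the closed set `A` to a point of all `k + 1` balls.
-/

open Metric Set Function

section

variable {X : Type*} [MetricSpace X] {A : Set X}

structure IsAdmissibleFamily (A : Set X) {ι : Type*} (c : ι → X) (r : ι → ℝ) : Prop where
  eq_of_notMem : ∀ i j, c i ∉ A → c j ∉ A → i = j
  infDist_le : ∀ i, infDist (c i) A ≤ r i
  dist_le : ∀ i j, dist (c i) (c j) ≤ r i + r j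

def MeetsAdmissibleBalls (A : Set X) (n : ℕ) : Prop :=
  ∀ (ι : Type) [Fintype ι], Fintype.card ι ≤ n → ∀ (c : ι → X) (r : ι → ℝ),
    IsAdmissibleFamily A c r → ∃ z ∈ A, ∀ i, dist z (c i) ≤ r i

namespace IsAdmissibleFamily

variable {ι κ : Type*} {c : ι → X} {r r' : ι → ℝ}

theorem nonneg (hc : IsAdmissibleFamily A c r) (i : ι) : 0 ≤ r i := by
  have := hc.dist_le i i
  rw [dist_self] at this
  linarith

theorem mono (hc : IsAdmissibleFamily A c r) (hr : r ≤ r') : IsAdmissibleFamily A c r' where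
  eq_of_notMem := hc.eq_of_notMem
  infDist_le i := (hc.infDist_le i).trans (hr i)
  dist_le i j := (hc.dist_le i j).trans (add_le_add (hr i) (hr j))

theorem comp (hc : IsAdmissibleFamily A c r) {f : κ → ι} (hf : Injective f) :
    IsAdmissibleFamily A (c ∘ f) (r ∘ f) where
  eq_of_notMem _ _ hi hj := hf (hc.eq_of_notMem _ _ hi hj)
  infDist_le i := hc.infDist_le (f i)
  dist_le i j := hc.dist_le (f i) (f j)

theorem of_forall_mem (hcA : ∀ i, c i ∈ A) (hr : ∀ i j, dist (c i) (c j) ≤ r i + r j) :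
    IsAdmissibleFamily A c r where
  eq_of_notMem i _ hi := absurd (hcA i) hi
  infDist_le i := by
    rw [infDist_zero_of_mem (hcA i)]
    simpa using hr i i
  dist_le := hr

theorem option (hc : IsAdmissibleFamily A c r) {x : X} {r₀ : ℝ} (hx : x ∉ A → ∀ i, c i ∈ A)
    (hxr : infDist x A ≤ r₀) (hxc : ∀ i, dist x (c i) ≤ r₀ + r i) :
    IsAdmissibleFamily A (fun o : Option ι => o.elim x c) (fun o => o.elim r₀ r) where
  eq_of_notMem
    | none, none, _, _ => rfl
    | none, some i, h, hi => absurd (hx h i) hi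
    | some i, none, hi, h => absurd (hx h i) hi
    | some i, some j, hi, hj => congrArg some (hc.eq_of_notMem i j hi hj)
  infDist_le
    | none => hxr
    | some i => hc.infDist_le i
  dist_le
    | none, none => by simpa using infDist_nonneg.trans hxr
    | none, some i => hxc i
    | some i, none => by simpa [dist_comm, add_comm] using hxc i
    | some i, some j => hc.dist_le i j

end IsAdmissibleFamily

namespace IsWeaklyExternallyNHyperconvex

variable {n : ℕ}

theorem exists_mem_of_card_lt (hW : IsWeaklyExternallyNHyperconvex A n) (hA : A.Nonempty)
    {ι : Type*} [Fintype ι] (hι : Fintype.card ι < n) {x : X} {r : ℝ} (hr : infDist x A ≤ r)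
    {y : ι → X} {s : ι → ℝ} (hy : ∀ i, y i ∈ A) (hxy : ∀ i, dist x (y i) ≤ r + s i)
    (hyy : ∀ i j, dist (y i) (y j) ≤ s i + s j) :
    ∃ z ∈ A, dist z x ≤ r ∧ ∀ i, dist z (y i) ≤ s i := by
  classical
  obtain ⟨a, ha⟩ := hA
  obtain ⟨e⟩ : Nonempty (ι ↪ Fin (n - 1)) :=
    Embedding.nonempty_of_card_le (by rw [Fintype.card_fin]; omega)
  have hr₀ : 0 ≤ r := infDist_nonneg.trans hr
  -- the unused slots are filled with a ball around `a` large enough to be harmless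
  let ŷ (o : Option ι) : X := o.elim a y
  let ŝ (o : Option ι) : ℝ := o.elim (dist x a + r) s
  have hŷ : ∀ o, ŷ o ∈ A := by rintro (_ | i) <;> simp [ŷ, ha, hy]
  have hxŷ : ∀ o, dist x (ŷ o) ≤ r + ŝ o := by
    rintro (_ | i)
    · simp only [ŷ, ŝ, Option.elim]; linarith
    · exact hxy i
  have hŷŷ : ∀ o o', dist (ŷ o) (ŷ o') ≤ ŝ o + ŝ o' :=
    ((IsAdmissibleFamily.of_forall_mem hy hyy).option (fun h => absurd ha h)
      (by rw [infDist_zero_of_mem ha]; positivity)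
      (fun i => by linarith [dist_triangle a x (y i), dist_comm a x, hxy i])).dist_le
  obtain ⟨z, ⟨hzA, hzx⟩, hz⟩ := hW x r hr (ŷ ∘ partialInv e) (ŝ ∘ partialInv e)
    (fun _ => hŷ _) (fun _ => hxŷ _) (fun _ _ => hŷŷ _ _)
  refine ⟨z, hzA, mem_closedBall.1 hzx, fun i => ?_⟩
  simpa [ŷ, ŝ, partialInv_left e.injective] using mem_iInter.1 hz (e i)

theorem meetsAdmissibleBalls (hW : IsWeaklyExternallyNHyperconvex A n) (hA : A.Nonempty) :
    MeetsAdmissibleBalls A n := by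
  classical
  intro ι _ hcard c r hc
  rcases isEmpty_or_nonempty ι with hι | hι
  · obtain ⟨a, ha⟩ := hA
    exact ⟨a, ha, isEmptyElim⟩
  obtain ⟨i₀, hi₀⟩ : ∃ i₀, ∀ i, i ≠ i₀ → c i ∈ A := by
    by_cases h : ∃ j, c j ∉ A
    · obtain ⟨j, hj⟩ := h
      exact ⟨j, fun i hi => by_contra fun hci => hi (hc.eq_of_notMem i j hci hj)⟩
    · push Not at h
      exact ⟨Classical.arbitrary ι, fun i _ => h i⟩
  have hcard' : Fintype.card {i // i ≠ i₀} < n := by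
    have := Fintype.card_pos (α := ι)
    simp only [ne_eq, Fintype.card_subtype_compl, Fintype.card_unique]
    omega
  obtain ⟨z, hzA, hz₀, hz⟩ := hW.exists_mem_of_card_lt hA hcard' (hc.infDist_le i₀)
    (y := fun i => c i) (s := fun i => r i) (fun i => hi₀ i i.2)
    (fun _ => hc.dist_le _ _) (fun _ _ => hc.dist_le _ _)
  refine ⟨z, hzA, fun i => ?_⟩
  by_cases hi : i = i₀
  · exact hi ▸ hz₀
  · exact hz ⟨i, hi⟩

end IsWeaklyExternallyNHyperconvex

namespace MeetsAdmissibleBalls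

variable {n m : ℕ}

theorem mono (h : MeetsAdmissibleBalls A n) (hmn : m ≤ n) : MeetsAdmissibleBalls A m :=
  fun ι _ hcard => h ι (hcard.trans hmn)

theorem isWeaklyExternallyNHyperconvex (h : MeetsAdmissibleBalls A n) (hn : 0 < n) :
    IsWeaklyExternallyNHyperconvex A n := by
  intro x r hr y s hy hxy hyy
  have hys : IsAdmissibleFamily A y s := .of_forall_mem hy hyy
  obtain ⟨z, hzA, hz⟩ := h (Option (Fin (n - 1)))
    (by rw [Fintype.card_option, Fintype.card_fin]; omega) _ _ (hys.option (fun _ => hy) hr hxy)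
  exact ⟨z, ⟨hzA, mem_closedBall.2 (hz none)⟩, mem_iInter.2 fun i => mem_closedBall.2 (hz i)⟩

theorem isClosed (h : MeetsAdmissibleBalls A 1) : IsClosed A := by
  refine isClosed_of_closure_subset fun x hx => ?_
  have hA : A.Nonempty := closure_nonempty_iff.1 ⟨x, hx⟩
  obtain ⟨z, hzA, hz⟩ := h Unit (by simp) (fun _ => x) (fun _ => 0)
    ⟨fun _ _ _ _ => rfl, fun _ => ((mem_closure_iff_infDist_zero hA).1 hx).le, fun _ _ => by simp⟩
  rwa [← dist_le_zero.1 (hz ())]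

end MeetsAdmissibleBalls

theorem Equiv.Perm.exists_forall_apply_ne {ι : Type*} [Fintype ι] (h : 2 ≤ Fintype.card ι) :
    ∃ σ : Equiv.Perm ι, ∀ i, σ i ≠ i := by
  let e := Fintype.equivFin ι
  refine ⟨e.trans ((finRotate _).trans e.symm), fun i hi => ?_⟩
  have he : e i ∈ (finRotate _).support := by simp [support_finRotate_of_le h]
  exact Equiv.Perm.mem_support.1 he (by simpa [Equiv.symm_apply_eq] using hi)

theorem Equiv.Perm.countP_map_mem_pair_le_two {ι : Type*} [Fintype ι] [DecidableEq ι]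
    (σ : Equiv.Perm ι) (i : ι) :
    ((Finset.univ.toList.map fun t => (t, σ t)).countP fun p => i = p.1 ∨ i = p.2) ≤ 2 := by
  rw [List.countP_map]
  change Finset.univ.toList.countP (fun t => decide (i = t ∨ i = σ t)) ≤ 2
  rw [← Multiset.coe_countP, Finset.coe_toList, Multiset.countP_eq_card_filter]
  calc (Finset.univ.filter fun t => i = t ∨ i = σ t).card
      ≤ ({i, σ.symm i} : Finset ι).card := Finset.card_le_card fun t ht => by
          rcases (Finset.mem_filter.1 ht).2 with rfl | rfl <;> simp
    _ ≤ 2 := Finset.card_le_two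

namespace MeetsAdmissibleBalls

variable {k : ℕ} {ι : Type} [Fintype ι] [DecidableEq ι] {c : ι → X} {ρ : ι → ℝ}

theorem exists_move_of_pair (hM : MeetsAdmissibleBalls A k) (hcard : Fintype.card ι ≤ k + 1)
    (hc : IsAdmissibleFamily A c ρ) {z : X} (hz : z ∈ A) {e : ι → ℝ}
    (hze : ∀ i, dist z (c i) ≤ ρ i + e i) {h : ℝ} (hh : 0 ≤ h) {a b : ι} (hab : a ≠ b) :
    ∃ z' ∈ A, dist z z' ≤ h ∧
      ∀ i, dist z' (c i) ≤ ρ i + if i = a ∨ i = b then e i + h else max (e i - h) 0 := by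
  let κ := {i // ¬(i = a ∨ i = b)}
  have hκ : Fintype.card (Option κ) ≤ k := by
    have hab₂ : Fintype.card {i // i = a ∨ i = b} = 2 := by
      simp [Fintype.card_subtype, Finset.filter_or, Finset.filter_eq', Finset.card_pair hab]
    have := hab₂ ▸ Fintype.card_subtype_le fun i => i = a ∨ i = b
    rw [Fintype.card_option, Fintype.card_subtype_compl, hab₂]
    omega
  let r (i : ι) := ρ i + max (e i - h) 0
  have hcr : IsAdmissibleFamily A (c ∘ Subtype.val) (r ∘ Subtype.val : κ → ℝ) :=
    (hc.mono fun i => le_add_of_nonneg_right (le_max_right _ _)).comp Subtype.val_injective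
  obtain ⟨z', hz'A, hz'⟩ := hM (Option κ) hκ _ _ <| hcr.option (r₀ := h) (fun h => absurd hz h)
    (by rw [infDist_zero_of_mem hz]; exact hh)
    (fun i => by simp only [comp, r]; linarith [hze i, le_max_left (e i - h) 0])
  refine ⟨z', hz'A, by rw [dist_comm]; exact hz' none, fun i => ?_⟩
  split_ifs with hi
  · have := hz' none
    simp only [Option.elim] at this
    linarith [dist_triangle z' z (c i), hze i]
  · exact hz' (some ⟨i, hi⟩)

theorem exists_move_of_list (hM : MeetsAdmissibleBalls A k) (hcard : Fintype.card ι ≤ k + 1)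
    (hc : IsAdmissibleFamily A c ρ) {h : ℝ} (hh : 0 ≤ h) (L : List (ι × ι))
    (hL : ∀ p ∈ L, p.1 ≠ p.2) {z : X} (hz : z ∈ A) {e : ι → ℝ}
    (hze : ∀ i, dist z (c i) ≤ ρ i + e i) :
    ∃ z' ∈ A, dist z z' ≤ L.length * h ∧ ∀ i, dist z' (c i) ≤ ρ i +
      (max (e i - (L.countP fun p => ¬(i = p.1 ∨ i = p.2)) * h) 0 +
        (L.countP fun p => i = p.1 ∨ i = p.2) * h) := by
  induction L generalizing z e with
  | nil =>
    refine ⟨z, hz, by simp, fun i => ?_⟩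
    simp only [List.countP_nil, Nat.cast_zero, zero_mul, sub_zero, add_zero]
    linarith [hze i, le_max_left (e i) 0]
  | cons p L ih =>
    obtain ⟨z₁, hz₁, hzz₁, hz₁e⟩ :=
      hM.exists_move_of_pair hcard hc hz hze hh (hL p List.mem_cons_self)
    obtain ⟨z₂, hz₂, hz₁z₂, hz₂e⟩ := ih (fun q hq => hL q (List.mem_cons_of_mem _ hq)) hz₁ hz₁e
    refine ⟨z₂, hz₂, ?_, fun i => (hz₂e i).trans ?_⟩
    · simp only [List.length_cons, Nat.cast_succ]
      linarith [dist_triangle z z₁ z₂]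
    · -- uses `max (x + h) 0 ≤ max x 0 + h` and `max (max (x - h) 0 - y) 0 ≤ max (x - h - y) 0`
      have hD : 0 ≤ ((L.countP fun p => ¬(i = p.1 ∨ i = p.2) : ℕ) : ℝ) * h := by positivity
      by_cases hi : i = p.1 ∨ i = p.2 <;> simp only [List.countP_cons, hi] <;> push_cast <;> grind

theorem exists_move_contracting (hM : MeetsAdmissibleBalls A k) (hk : 4 ≤ k)
    (hcard : Fintype.card ι = k + 1) (hc : IsAdmissibleFamily A c ρ) {z : X} (hz : z ∈ A)
    {E : ℝ} (hE : 0 ≤ E) (hzE : ∀ i, dist z (c i) ≤ ρ i + E) :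
    ∃ z' ∈ A, dist z z' ≤ (k + 1) * E ∧ ∀ i, dist z' (c i) ≤ ρ i + 2 / 3 * E := by
  obtain ⟨σ, hσ⟩ := Equiv.Perm.exists_forall_apply_ne (ι := ι) (by omega)
  let L := Finset.univ.toList.map fun t => (t, σ t)
  have hL : ∀ p ∈ L, p.1 ≠ p.2 := by
    simp only [L, List.mem_map]
    rintro _ ⟨t, -, rfl⟩
    exact (hσ t).symm
  have hlen : L.length = k + 1 := by simp [L, hcard]
  obtain ⟨z', hz', hzz', hz'c⟩ :=
    hM.exists_move_of_list hcard.le hc (h := E / 3) (by positivity) L hL hz (e := fun _ => E) hzE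
  refine ⟨z', hz', ?_, fun i => (hz'c i).trans ?_⟩
  · rw [hlen] at hzz'
    push_cast at hzz'
    nlinarith
  · -- each index lies in at most two of the `k + 1` pairs, so it is lowered at least `3` times
    have hU := σ.countP_map_mem_pair_le_two i
    have hUD := List.length_eq_countP_add_countP (fun p => i = p.1 ∨ i = p.2) (l := L)
    simp only [decide_eq_true_eq] at hUD
    set U := L.countP fun p => i = p.1 ∨ i = p.2
    set D := L.countP fun p => ¬(i = p.1 ∨ i = p.2)
    have hD : (3 : ℝ) ≤ D := by exact_mod_cast (by omega : 3 ≤ D)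
    have hU' : (U : ℝ) ≤ 2 := by exact_mod_cast hU
    rw [max_eq_right (by nlinarith)]
    nlinarith

end MeetsAdmissibleBalls

open Filter Topology in
theorem exists_forall_pos_mem_of_refine [CompleteSpace X] {S : ℝ → Set X}
    (hS : ∀ ε, IsClosed (S ε)) (hmono : Monotone S) {q C : ℝ} (hq₀ : 0 ≤ q) (hq : q < 1)
    (hrefine : ∀ ε, 0 ≤ ε → ∀ z ∈ S ε, ∃ z' ∈ S (q * ε), dist z z' ≤ C * ε) {ε₀ : ℝ}
    (hε₀ : 0 ≤ ε₀) (h₀ : (S ε₀).Nonempty) : ∃ w, ∀ ε > 0, w ∈ S ε := by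
  obtain ⟨z₀, hz₀⟩ := h₀
  choose! next hnext hdist using hrefine
  let u (n : ℕ) : X := Nat.rec z₀ (fun m z => next (q ^ m * ε₀) z) n
  have hu : ∀ n, u n ∈ S (q ^ n * ε₀) := by
    intro n
    induction n with
    | zero => simpa [u] using hz₀
    | succ n ih =>
      convert hnext _ (by positivity) _ ih using 2
      ring
  have hcauchy : CauchySeq u := cauchySeq_of_le_geometric q (C * ε₀) hq fun n => by
    convert hdist _ (by positivity) _ (hu n) using 1
    ring
  obtain ⟨w, hw⟩ := cauchySeq_tendsto_of_complete hcauchy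
  refine ⟨w, fun ε hε => (hS ε).mem_of_tendsto hw ?_⟩
  have hlim : Tendsto (fun n => q ^ n * ε₀) atTop (𝓝 0) := by
    simpa using (tendsto_pow_atTop_nhds_zero_of_lt_one hq₀ hq).mul_const ε₀
  filter_upwards [hlim.eventually (eventually_le_nhds hε)] with n hn using hmono hn (hu n)

namespace MeetsAdmissibleBalls

variable {k : ℕ} [CompleteSpace X]

theorem succ (hM : MeetsAdmissibleBalls A k) (hk : 4 ≤ k) (hA : IsClosed A) :
    MeetsAdmissibleBalls A (k + 1) := by
  classical
  intro ι _ hcard c ρ hc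
  rcases hcard.lt_or_eq with hlt | hcard
  · exact hM ι (by omega) c ρ hc
  obtain ⟨j, hj⟩ : ∃ j, c j ∈ A := by
    by_contra! h
    have := Fintype.card_le_one_iff.2 fun i j => hc.eq_of_notMem i j (h i) (h j)
    omega
  let S (ε : ℝ) : Set X := A ∩ ⋂ i, closedBall (c i) (ρ i + ε)
  obtain ⟨w, hw⟩ := exists_forall_pos_mem_of_refine (S := S)
    (fun _ => hA.inter (isClosed_iInter fun _ => isClosed_closedBall))
    (fun _ _ hεε' => inter_subset_inter_right _ <| iInter_mono fun _ =>
      closedBall_subset_closedBall (by linarith))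
    (q := 2 / 3) (C := k + 1) (by norm_num) (by norm_num)
    (fun ε hε z ⟨hzA, hz⟩ => by
      obtain ⟨z', hz'A, hzz', hz'⟩ := hM.exists_move_contracting hk hcard hc hzA hε
        fun i => mem_closedBall.1 (mem_iInter.1 hz i)
      exact ⟨z', ⟨hz'A, mem_iInter.2 fun i => mem_closedBall.2 (hz' i)⟩, hzz'⟩)
    (hc.nonneg j) ⟨c j, hj, mem_iInter.2 fun i => by
      rw [mem_closedBall, add_comm]; exact hc.dist_le j i⟩
  refine ⟨w, (hw 1 one_pos).1, fun i => le_of_forall_pos_le_add fun ε hε => ?_⟩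
  exact mem_closedBall.1 (mem_iInter.1 (hw ε hε).2 i)

theorem of_four (h4 : MeetsAdmissibleBalls A 4) (n : ℕ) : MeetsAdmissibleBalls A n := by
  have hA := (h4.mono (by norm_num)).isClosed
  rcases le_total n 4 with hn | hn
  · exact h4.mono hn
  induction n, hn using Nat.le_induction with
  | base => exact h4
  | succ m hm ih => exact ih.succ hm hA

end MeetsAdmissibleBalls

end

theorem isWeaklyExternallyNHyperconvex_four_iff_forall (X : Type*) [MetricSpace X]
    [CompleteSpace X] (A : Set X) (hA : A.Nonempty) :
    IsWeaklyExternallyNHyperconvex A 4 ↔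
      ∀ n : ℕ, 0 < n → IsWeaklyExternallyNHyperconvex A n :=
  ⟨fun h4 n hn => ((h4.meetsAdmissibleBalls hA).of_four n).isWeaklyExternallyNHyperconvex hn,
    fun h => h 4 (by norm_num)⟩
end

section
/- A metric space X is 3-hyperconvex if and only if it is metrically convex and modular. -/
/-- A metric space `X` is `3`-hyperconvex if for every family of `3` closed balls
`B(x i, r i)` with `d(x i, x j) ≤ r i + r j`, the intersection is nonempty. -/
def Is3Hyperconvex (X : Type*) [MetricSpace X] : Prop :=
  ∀ (x : Fin 3 → X) (r : Fin 3 → ℝ),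
    (∀ i j, dist (x i) (x j) ≤ r i + r j) →
    (⋂ i, Metric.closedBall (x i) (r i)).Nonempty

/-- A metric space `X` is metrically convex if for all `x₀, x₁ ∈ X` and `t ∈ [0,1]` there
is a point `xₜ` with `d(x₀,xₜ) = t d(x₀,x₁)` and `d(xₜ,x₁) = (1-t) d(x₀,x₁)`. -/
def MetricallyConvex (X : Type*) [MetricSpace X] : Prop :=
  ∀ x₀ x₁ : X, ∀ t ∈ Set.Icc (0 : ℝ) 1, ∃ xt : X,
    dist x₀ xt = t * dist x₀ x₁ ∧ dist xt x₁ = (1 - t) * dist x₀ x₁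

/-- A metric space `X` is modular if any three points `x, y, z` admit a median, i.e. a
point lying in the metric intervals `I(x,y)`, `I(y,z)` and `I(z,x)` simultaneously. -/
def IsModular (X : Type*) [MetricSpace X] : Prop :=
  ∀ x y z : X, ∃ m : X,
    dist x y = dist x m + dist m y ∧
    dist y z = dist y m + dist m z ∧
    dist z x = dist z m + dist m x

private lemma aux_move {X : Type*} [MetricSpace X] (hc : MetricallyConvex X)
    (x₀ x₁ x₂ m : X) (r₀ r₁ r₂ : ℝ)
    (h01 : dist x₀ x₁ = dist x₀ m + dist m x₁)
    (h20 : dist x₂ x₀ = dist x₂ m + dist m x₀)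
    (hr01 : dist x₀ x₁ ≤ r₀ + r₁) (hr02 : dist x₀ x₂ ≤ r₀ + r₂)
    (hr0 : 0 ≤ r₀)
    (h0 : r₀ < dist x₀ m) :
    ∃ p, dist x₀ p ≤ r₀ ∧ dist x₁ p ≤ r₁ ∧ dist x₂ p ≤ r₂ := by
  have ha : (0:ℝ) < dist x₀ m := lt_of_le_of_lt hr0 h0
  have ht : r₀ / dist x₀ m ∈ Set.Icc (0:ℝ) 1 := by
    constructor
    · positivity
    · rw [div_le_one ha]; linarith
  obtain ⟨p, hp₀, hpm⟩ := hc x₀ m _ ht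
  have e0 : dist x₀ p = r₀ := by
    rw [hp₀, div_mul_cancel₀ _ (ne_of_gt ha)]
  have em : dist p m = dist x₀ m - r₀ := by
    rw [hpm]; field_simp
  refine ⟨p, le_of_eq e0, ?_, ?_⟩
  · have t1 := dist_triangle x₁ p m
    have t2 := dist_triangle x₁ m p
    have := dist_comm p m
    have := dist_comm m x₁
    have := dist_comm x₁ m
    linarith [dist_triangle x₁ m p, dist_comm m p ▸ em]
  · have : dist x₂ p ≤ dist x₂ m + dist m p := dist_triangle x₂ m p
    have hmp : dist m p = dist x₀ m - r₀ := by rw [dist_comm]; exact em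
    have hd02 : dist x₀ x₂ = dist x₂ x₀ := dist_comm _ _
    have hm0 : dist m x₀ = dist x₀ m := dist_comm _ _
    linarith

theorem is3Hyperconvex_iff_metricallyConvex_and_modular (X : Type*) [MetricSpace X] :
    Is3Hyperconvex X ↔ MetricallyConvex X ∧ IsModular X := by
  constructor
  · intro h
    constructor
    · intro x₀ x₁ t ht
      obtain ⟨ht0, ht1⟩ := ht
      set d := dist x₀ x₁ with hd
      have hdnn : 0 ≤ d := dist_nonneg
      have hcond : ∀ i j : Fin 3, dist ((![x₀, x₁, x₁]) i) ((![x₀, x₁, x₁]) j) ≤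
          (![t * d, (1 - t) * d, (1 - t) * d]) i + (![t * d, (1 - t) * d, (1 - t) * d]) j := by
        intro i j
        fin_cases i <;> fin_cases j <;>
          simp [dist_self] <;>
          first
            | nlinarith [dist_nonneg (x := x₀) (y := x₁)]
            | (rw [dist_comm] <;> nlinarith [dist_nonneg (x := x₀) (y := x₁)])
      obtain ⟨p, hp⟩ := h ![x₀, x₁, x₁] ![t * d, (1 - t) * d, (1 - t) * d] hcond
      simp only [Set.mem_iInter, Metric.mem_closedBall] at hp
      have h0 := hp 0
      have h1 := hp 1
      simp only [Matrix.cons_val_zero, Matrix.cons_val_one, Matrix.head_cons] at h0 h1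
      have t3 := dist_triangle x₀ p x₁
      have c0 : dist x₀ p = dist p x₀ := dist_comm _ _
      have c1 : dist p x₁ = dist x₁ p := dist_comm _ _
      exact ⟨p, by linarith, by linarith⟩
    · intro x y z
      have txy := dist_triangle x y z
      have tyz := dist_triangle y z x
      have tzx := dist_triangle z x y
      have cxy : dist x y = dist y x := dist_comm _ _
      have cyz : dist y z = dist z y := dist_comm _ _
      have czx : dist z x = dist x z := dist_comm _ _
      have hcond : ∀ i j : Fin 3, dist ((![x, y, z]) i) ((![x, y, z]) j) ≤
          (![(dist x y + dist x z - dist y z) / 2,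
             (dist x y + dist y z - dist x z) / 2,
             (dist x z + dist y z - dist x y) / 2]) i +
          (![(dist x y + dist x z - dist y z) / 2,
             (dist x y + dist y z - dist x z) / 2,
             (dist x z + dist y z - dist x y) / 2]) j := by
        intro i j
        fin_cases i <;> fin_cases j <;>
          simp [dist_self] <;>
          first
            | linarith
            | (rw [dist_comm] <;> linarith)
      obtain ⟨p, hp⟩ := h ![x, y, z]
        ![(dist x y + dist x z - dist y z) / 2,
          (dist x y + dist y z - dist x z) / 2,
          (dist x z + dist y z - dist x y) / 2] hcond
      simp only [Set.mem_iInter, Metric.mem_closedBall] at hp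
      have h0 := hp 0
      have h1 := hp 1
      have h2 := hp 2
      simp only [Matrix.cons_val_zero, Matrix.cons_val_one, Matrix.head_cons,
        Matrix.cons_val_two, Matrix.tail_cons] at h0 h1 h2
      have t01 := dist_triangle x p y
      have t12 := dist_triangle y p z
      have t20 := dist_triangle z p x
      have c0 : dist x p = dist p x := dist_comm _ _
      have c1 : dist y p = dist p y := dist_comm _ _
      have c2 : dist z p = dist p z := dist_comm _ _
      exact ⟨p, by linarith, by linarith, by linarith⟩
  · rintro ⟨hc, hm⟩ x r hr
    have hrnn : ∀ i, 0 ≤ r i := by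
      intro i
      have := hr i i
      simp only [dist_self] at this
      linarith
    obtain ⟨m, e01, e12, e20⟩ := hm (x 0) (x 1) (x 2)
    have key : ∃ p, dist (x 0) p ≤ r 0 ∧ dist (x 1) p ≤ r 1 ∧ dist (x 2) p ≤ r 2 := by
      by_cases h0 : r 0 < dist (x 0) m
      · exact aux_move hc (x 0) (x 1) (x 2) m (r 0) (r 1) (r 2) e01 e20
          (hr 0 1) (hr 0 2) (hrnn 0) h0
      · by_cases h1 : r 1 < dist (x 1) m
        · obtain ⟨p, p1, p2, p0⟩ := aux_move hc (x 1) (x 2) (x 0) m (r 1) (r 2) (r 0) e12 e01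
            (hr 1 2) (hr 1 0) (hrnn 1) h1
          exact ⟨p, p0, p1, p2⟩
        · by_cases h2 : r 2 < dist (x 2) m
          · obtain ⟨p, p2, p0, p1⟩ := aux_move hc (x 2) (x 0) (x 1) m (r 2) (r 0) (r 1) e20 e12
              (hr 2 0) (hr 2 1) (hrnn 2) h2
            exact ⟨p, p0, p1, p2⟩
          · push_neg at h0 h1 h2
            exact ⟨m, h0, h1, h2⟩
    obtain ⟨p, p0, p1, p2⟩ := key
    refine ⟨p, ?_⟩
    simp only [Set.mem_iInter, Metric.mem_closedBall]
    intro i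
    fin_cases i <;> rw [dist_comm] <;> assumption
end

section
/- Let X be a complete metric space and let A be a closed subset of X that is almost externally (n+1)-hyperconvex in X, for a positive integer n. Then A is externally n-hyperconvex in X. -/
/-- A subset `A` of a metric space `X` is almost externally `n`-hyperconvex in `X` if for
every such family of `n` closed balls and every `ε > 0`, the intersection
`A ∩ ⋂ i, B(x i, r i + ε)` is nonempty. -/
def IsAlmostExternallyNHyperconvex {X : Type*} [MetricSpace X] (A : Set X) (n : ℕ) : Prop :=
  ∀ (x : Fin n → X) (r : Fin n → ℝ),
    (∀ i, Metric.infDist (x i) A ≤ r i) →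
    (∀ i j, dist (x i) (x j) ≤ r i + r j) →
    ∀ ε > (0 : ℝ), (A ∩ ⋂ i, Metric.closedBall (x i) (r i + ε)).Nonempty

theorem isExternallyNHyperconvex_of_almost_succ (X : Type*) [MetricSpace X] [CompleteSpace X]
    (A : Set X) (hAc : IsClosed A) (n : ℕ) (hn : 0 < n)
    (h : IsAlmostExternallyNHyperconvex A (n + 1)) :
    IsExternallyNHyperconvex A n := by
  intro x r hr hd
  set E : ℕ → ℝ := fun k => (2:ℝ)⁻¹ ^ k with hE
  have hEpos : ∀ k, 0 < E k := fun k => pow_pos (by norm_num) k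
  -- base point
  obtain ⟨a0, ha0A, ha0B⟩ := h (Fin.snoc x (x ⟨0, hn⟩)) (Fin.snoc r (r ⟨0, hn⟩))
    (fun i => by
      refine Fin.lastCases ?_ (fun i => ?_) i <;> simp [hr _]
      )
    (fun i j => by
      refine Fin.lastCases ?_ (fun i => ?_) i <;>
        refine Fin.lastCases ?_ (fun j => ?_) j <;>
        simp only [Fin.snoc_last, Fin.snoc_castSucc] <;> exact hd _ _)
    1 one_pos
  have ha0x : ∀ i, dist a0 (x i) ≤ r i + E 0 := by
    intro i
    have := Set.mem_iInter.1 ha0B i.castSucc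
    simpa [hE] using this
  -- key step
  have key : ∀ (k : ℕ) (a : X), a ∈ A → (∀ i, dist a (x i) ≤ r i + E k) →
      ∃ b, b ∈ A ∧ (∀ i, dist b (x i) ≤ r i + E (k+1)) ∧ dist b a ≤ E k + E (k+1) := by
    intro k a ha hax
    obtain ⟨b, hbA, hbB⟩ := h (Fin.snoc x a) (Fin.snoc r (E k))
      (fun i => by
        refine Fin.lastCases ?_ (fun i => ?_) i
        · simpa [Metric.infDist_zero_of_mem ha] using (hEpos k).le
        · simpa using hr i)
      (fun i j => by
        refine Fin.lastCases ?_ (fun i => ?_) i <;>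
          refine Fin.lastCases ?_ (fun j => ?_) j
        · simpa using add_nonneg (hEpos k).le (hEpos k).le
        · simp only [Fin.snoc_last, Fin.snoc_castSucc]
          rw [add_comm]; exact hax j
        · simp only [Fin.snoc_last, Fin.snoc_castSucc]
          rw [dist_comm]; exact hax i
        · simpa using hd i j)
      (E (k+1)) (hEpos (k+1))
    refine ⟨b, hbA, fun i => ?_, ?_⟩
    · have := Set.mem_iInter.1 hbB i.castSucc
      simpa using this
    · have := Set.mem_iInter.1 hbB (Fin.last n)
      simpa using this
  choose! f hfA hfx hfd using key
  set a : ℕ → X := fun k => Nat.rec a0 (fun k ak => f k ak) k with ha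
  have haprop : ∀ k, a k ∈ A ∧ ∀ i, dist (a k) (x i) ≤ r i + E k := by
    intro k
    induction k with
    | zero => exact ⟨ha0A, ha0x⟩
    | succ k ih => exact ⟨hfA k (a k) ih.1 ih.2, hfx k (a k) ih.1 ih.2⟩
  have hstep : ∀ k, dist (a k) (a (k+1)) ≤ 2 * (2⁻¹:ℝ) ^ k := by
    intro k
    have := hfd k (a k) (haprop k).1 (haprop k).2
    rw [dist_comm] at this
    calc dist (a k) (a (k+1)) ≤ E k + E (k+1) := this
      _ ≤ 2 * (2⁻¹:ℝ) ^ k := by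
          simp only [hE, pow_succ]
          nlinarith [pow_pos (show (0:ℝ) < 2⁻¹ by norm_num) k]
  have hcau : CauchySeq a := cauchySeq_of_le_geometric 2⁻¹ 2 (by norm_num) hstep
  obtain ⟨L, hL⟩ := cauchySeq_tendsto_of_complete hcau
  have hLA : L ∈ A := hAc.mem_of_tendsto hL (Filter.Eventually.of_forall fun k => (haprop k).1)
  refine ⟨L, hLA, Set.mem_iInter.2 fun i => ?_⟩
  rw [Metric.mem_closedBall]
  have h1 : Filter.Tendsto (fun k => dist (a k) (x i)) Filter.atTop (nhds (dist L (x i))) :=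
    (Continuous.dist continuous_id continuous_const).continuousAt.tendsto.comp hL
  have h2 : Filter.Tendsto (fun k => r i + E k) Filter.atTop (nhds (r i)) := by
    have : Filter.Tendsto E Filter.atTop (nhds 0) := by
      simpa [hE] using tendsto_pow_atTop_nhds_zero_of_lt_one (by norm_num : (0:ℝ) ≤ 2⁻¹)
        (by norm_num : (2⁻¹:ℝ) < 1)
    simpa using (tendsto_const_nhds.add this)
  exact le_of_tendsto_of_tendsto' h1 h2 fun k => (haprop k).2 i
end

section
/- Let X be a complete metric space, let A be a closed subset of X that is almost externally n-hyperconvex in X, and let k ≤ n−2. Then for every family of k closed balls B(x_1,r_1),...,B(x_k,r_k) with d(x_i,x_j) ≤ r_i + r_j for all i,j and d(x_i,A) ≤ r_i for all i, the set A' := A ∩ ⋂_{i=1}^k B(x_i,r_i) is a closed, almost externally (n−k)-hyperconvex subset of X. -/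
/-- Auxiliary "chasing" lemma: starting from a point of `A` within `ρ i + δ` of each center,
we can find a point of `A` exactly within the balls, at distance at most `4δ`. -/
lemma chase_aux {X : Type*} [MetricSpace X] [CompleteSpace X] {A : Set X} (hAc : IsClosed A)
    {n : ℕ} (hA : IsAlmostExternallyNHyperconvex A n) {m : ℕ} (hm : m + 1 ≤ n)
    (z : Fin m → X) (ρ : Fin m → ℝ)
    (hρ : ∀ i, Metric.infDist (z i) A ≤ ρ i)
    (hzd : ∀ i j, dist (z i) (z j) ≤ ρ i + ρ j)
    {a₀ : X} (ha₀ : a₀ ∈ A) {δ : ℝ} (hδ : 0 < δ)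
    (h0 : ∀ i, dist a₀ (z i) ≤ ρ i + δ) :
    ∃ a ∈ A, (∀ i, dist a (z i) ≤ ρ i) ∧ dist a₀ a ≤ 4 * δ := by
  -- one-step improvement
  have step : ∀ (b : X) (η : ℝ), b ∈ A → 0 < η → (∀ i, dist b (z i) ≤ ρ i + η) →
      ∃ c, (c ∈ A ∧ ∀ i, dist c (z i) ≤ ρ i + η / 2) ∧ dist b c ≤ 2 * η := by
    intro b η hb hη hbd
    set w : Fin n → X := fun i => if h : i.1 < m then z ⟨i.1, h⟩ else b with hw
    set τ : Fin n → ℝ := fun i => if h : i.1 < m then ρ ⟨i.1, h⟩ else η with hτ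
    have hwτ1 : ∀ (i : Fin n) (h : i.1 < m), w i = z ⟨i.1, h⟩ ∧ τ i = ρ ⟨i.1, h⟩ := by
      intro i h; simp [hw, hτ, h]
    have hwτ2 : ∀ (i : Fin n), ¬ i.1 < m → w i = b ∧ τ i = η := by
      intro i h; simp [hw, hτ, h]
    have h1 : ∀ i, Metric.infDist (w i) A ≤ τ i := by
      intro i
      by_cases h : i.1 < m
      · rw [(hwτ1 i h).1, (hwτ1 i h).2]; exact hρ _
      · rw [(hwτ2 i h).1, (hwτ2 i h).2, Metric.infDist_zero_of_mem hb]; exact hη.le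
    have h2 : ∀ i j, dist (w i) (w j) ≤ τ i + τ j := by
      intro i j
      by_cases hi : i.1 < m <;> by_cases hj : j.1 < m
      · rw [(hwτ1 i hi).1, (hwτ1 i hi).2, (hwτ1 j hj).1, (hwτ1 j hj).2]
        exact hzd _ _
      · rw [(hwτ1 i hi).1, (hwτ1 i hi).2, (hwτ2 j hj).1, (hwτ2 j hj).2,
          dist_comm]
        exact hbd _
      · rw [(hwτ2 i hi).1, (hwτ2 i hi).2, (hwτ1 j hj).1, (hwτ1 j hj).2]
        calc dist b (z ⟨j.1, by omega⟩) ≤ ρ ⟨j.1, by omega⟩ + η := hbd _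
        _ = η + ρ ⟨j.1, by omega⟩ := by ring
      · rw [(hwτ2 i hi).1, (hwτ2 j hj).1, (hwτ2 i hi).2, (hwτ2 j hj).2,
          dist_self]
        positivity
    obtain ⟨c, hcA, hcB⟩ := hA w τ h1 h2 (η / 2) (by positivity)
    simp only [Set.mem_iInter, Metric.mem_closedBall] at hcB
    refine ⟨c, ⟨hcA, fun i => ?_⟩, ?_⟩
    · have := hcB ⟨i.1, by omega⟩
      rw [(hwτ1 ⟨i.1, by omega⟩ i.2).1, (hwτ1 ⟨i.1, by omega⟩ i.2).2] at this
      simpa using this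
    · have := hcB ⟨m, by omega⟩
      rw [(hwτ2 ⟨m, by omega⟩ (by simp)).1, (hwτ2 ⟨m, by omega⟩ (by simp)).2,
        dist_comm] at this
      linarith
  -- iterate
  set P : ℕ → X → Prop := fun p b => b ∈ A ∧ ∀ i, dist b (z i) ≤ ρ i + δ / 2 ^ p with hP
  have hstep : ∀ (p : ℕ) (b : X), P p b → ∃ c, P (p + 1) c ∧ dist b c ≤ 2 * (δ / 2 ^ p) := by
    intro p b hb
    obtain ⟨c, ⟨hc1, hc2⟩, hc3⟩ := step b (δ / 2 ^ p) hb.1 (by positivity) hb.2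
    refine ⟨c, ⟨hc1, fun i => ?_⟩, hc3⟩
    have := hc2 i
    have : δ / 2 ^ p / 2 = δ / 2 ^ (p + 1) := by ring
    calc dist c (z i) ≤ ρ i + δ / 2 ^ p / 2 := hc2 i
      _ = ρ i + δ / 2 ^ (p + 1) := by rw [this]
  have hP0 : P 0 a₀ := ⟨ha₀, by simpa using h0⟩
  let g : ∀ _ : ℕ, {b : X // P _ b} := fun p =>
    Nat.rec (motive := fun p => {b : X // P p b}) ⟨a₀, hP0⟩
      (fun p prev => ⟨(hstep p prev.1 prev.2).choose, (hstep p prev.1 prev.2).choose_spec.1⟩) p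
  set a : ℕ → X := fun p => (g p).1 with ha
  have ha0 : a 0 = a₀ := rfl
  have haP : ∀ p, P p (a p) := fun p => (g p).2
  have hdist : ∀ p, dist (a p) (a (p + 1)) ≤ (2 * δ) * (1 / 2) ^ p := by
    intro p
    have h := (hstep p (g p).1 (g p).2).choose_spec.2
    have : a (p + 1) = (hstep p (g p).1 (g p).2).choose := rfl
    rw [this]
    calc dist (a p) _ ≤ 2 * (δ / 2 ^ p) := h
      _ = (2 * δ) * (1 / 2) ^ p := by
          rw [div_pow, one_pow]; ring
  have hcauchy : CauchySeq a := cauchySeq_of_le_geometric (1 / 2) (2 * δ) (by norm_num) hdist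
  obtain ⟨l, hl⟩ := cauchySeq_tendsto_of_complete hcauchy
  refine ⟨l, ?_, ?_, ?_⟩
  · exact hAc.mem_of_tendsto hl (Filter.Eventually.of_forall fun p => (haP p).1)
  · intro i
    have h1 : Filter.Tendsto (fun p => dist (a p) (z i)) Filter.atTop (nhds (dist l (z i))) :=
      (Continuous.dist continuous_id continuous_const).continuousAt.tendsto.comp hl
    have h2 : Filter.Tendsto (fun p : ℕ => ρ i + δ / 2 ^ p) Filter.atTop (nhds (ρ i + 0)) := by
      refine Filter.Tendsto.const_add _ ?_
      simpa using tendsto_const_nhds.div_atTop (tendsto_pow_atTop_atTop_of_one_lt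
        (by norm_num : (1:ℝ) < 2))
    rw [add_zero] at h2
    exact le_of_tendsto_of_tendsto' h1 h2 fun p => (haP p).2 i
  · have := dist_le_of_le_geometric_of_tendsto₀ (1 / 2) (2 * δ) (by norm_num) hdist hl
    rw [ha0] at this
    calc dist a₀ l ≤ 2 * δ / (1 - 1 / 2) := this
      _ = 4 * δ := by ring

theorem isAlmostExternallyNHyperconvex_inter_balls (X : Type*) [MetricSpace X]
    [CompleteSpace X] (A : Set X) (hAc : IsClosed A) (n k : ℕ) (hk : k + 2 ≤ n)
    (hA : IsAlmostExternallyNHyperconvex A n)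
    (x : Fin k → X) (r : Fin k → ℝ)
    (hr : ∀ i, Metric.infDist (x i) A ≤ r i)
    (hd : ∀ i j, dist (x i) (x j) ≤ r i + r j) :
    IsClosed (A ∩ ⋂ i, Metric.closedBall (x i) (r i)) ∧
      IsAlmostExternallyNHyperconvex (A ∩ ⋂ i, Metric.closedBall (x i) (r i)) (n - k) := by
  set A' : Set X := A ∩ ⋂ i, Metric.closedBall (x i) (r i) with hA'def
  refine ⟨hAc.inter (isClosed_iInter fun i => Metric.isClosed_closedBall), ?_⟩
  intro y s hs hyd ε hε
  have hkn : k < n := by omega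
  have hnk : 0 < n - k := by omega
  -- A' is nonempty
  have hA'ne : A'.Nonempty := by
    obtain ⟨a₀, ha₀A, ha₀d⟩ : ∃ a ∈ A, ∀ i : Fin k, dist a (x i) ≤ r i + 1 := by
      rcases Nat.eq_zero_or_pos k with hk0 | hkpos
      · -- k = 0 : just need a point of A
        set p : X := y ⟨0, hnk⟩ with hp
        obtain ⟨a, haA, _⟩ := hA (fun _ => p) (fun _ => Metric.infDist p A)
          (fun _ => le_refl _)
          (fun _ _ => by
            rw [dist_self]
            have := Metric.infDist_nonneg (x := p) (s := A); linarith)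
          1 one_pos
        exact ⟨a, haA, fun i => absurd i.2 (by omega)⟩
      · -- pad the family x with copies of x 0
        set w : Fin n → X := fun i => if h : i.1 < k then x ⟨i.1, h⟩ else x ⟨0, hkpos⟩ with hw
        set τ : Fin n → ℝ := fun i => if h : i.1 < k then r ⟨i.1, h⟩ else r ⟨0, hkpos⟩ with hτ
        have h1 : ∀ i, Metric.infDist (w i) A ≤ τ i := by
          intro i; by_cases h : i.1 < k <;> simp [hw, hτ, h, hr]
        have hr0 : 0 ≤ r ⟨0, hkpos⟩ := le_trans Metric.infDist_nonneg (hr _)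
        have h2 : ∀ i j, dist (w i) (w j) ≤ τ i + τ j := by
          intro i j
          by_cases hi : i.1 < k <;> by_cases hj : j.1 < k <;>
            simp [hw, hτ, hi, hj, hd] <;> linarith
        obtain ⟨a, haA, haB⟩ := hA w τ h1 h2 1 one_pos
        simp only [Set.mem_iInter, Metric.mem_closedBall] at haB
        refine ⟨a, haA, fun i => ?_⟩
        have := haB ⟨i.1, by omega⟩
        simpa [hw, hτ, i.2] using this
    obtain ⟨a, haA, had, -⟩ := chase_aux hAc hA (by omega : k + 1 ≤ n) x r hr hd ha₀A one_pos ha₀d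
    exact ⟨a, haA, Set.mem_iInter.2 fun i => Metric.mem_closedBall.2 (had i)⟩
  -- derived facts about the y-balls
  have hsA : ∀ j, Metric.infDist (y j) A ≤ s j := fun j =>
    le_trans (Metric.infDist_le_infDist_of_subset Set.inter_subset_left hA'ne) (hs j)
  have hxy : ∀ (i : Fin k) (j : Fin (n - k)), dist (x i) (y j) ≤ r i + s j := by
    intro i j
    refine le_of_forall_pos_le_add fun δ hδ => ?_
    have h1 : Metric.infDist (y j) A' < s j + δ := lt_of_le_of_lt (hs j) (by linarith)
    obtain ⟨a', ha'A', ha'd⟩ := (Metric.infDist_lt_iff hA'ne).1 h1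
    have ha'x : dist a' (x i) ≤ r i := Metric.mem_closedBall.1 (Set.mem_iInter.1 ha'A'.2 i)
    calc dist (x i) (y j) ≤ dist (x i) a' + dist a' (y j) := dist_triangle _ _ _
      _ ≤ r i + (s j + δ) := by
          rw [dist_comm (x i) a', dist_comm a' (y j)]; exact add_le_add ha'x ha'd.le
      _ = r i + s j + δ := by ring
  -- combined family of n balls, applied with ε/8
  set w : Fin n → X := fun i => if h : i.1 < k then x ⟨i.1, h⟩ else y ⟨i.1 - k, by omega⟩ with hw
  set τ : Fin n → ℝ := fun i => if h : i.1 < k then r ⟨i.1, h⟩ else s ⟨i.1 - k, by omega⟩ with hτ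
  have h1 : ∀ i, Metric.infDist (w i) A ≤ τ i := by
    intro i; by_cases h : i.1 < k <;> simp [hw, hτ, h, hr, hsA]
  have h2 : ∀ i j, dist (w i) (w j) ≤ τ i + τ j := by
    intro i j
    by_cases hi : i.1 < k <;> by_cases hj : j.1 < k <;> simp only [hw, hτ, hi, hj, dif_pos,
      dif_neg, not_false_iff, dite_true, dite_false]
    · exact hd _ _
    · exact hxy _ _
    · rw [dist_comm]
      calc dist (x ⟨j.1, hj⟩) (y ⟨i.1 - k, by omega⟩) ≤ r ⟨j.1, hj⟩ + s ⟨i.1 - k, by omega⟩ :=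
            hxy _ _
        _ = s ⟨i.1 - k, by omega⟩ + r ⟨j.1, hj⟩ := by ring
    · exact hyd _ _
  obtain ⟨a₁, ha₁A, ha₁B⟩ := hA w τ h1 h2 (ε / 8) (by positivity)
  simp only [Set.mem_iInter, Metric.mem_closedBall] at ha₁B
  have ha₁x : ∀ i : Fin k, dist a₁ (x i) ≤ r i + ε / 8 := by
    intro i
    have := ha₁B ⟨i.1, by omega⟩
    simpa [hw, hτ, i.2] using this
  have ha₁y : ∀ j : Fin (n - k), dist a₁ (y j) ≤ s j + ε / 8 := by
    intro j
    have hj : k + j.1 < n := by omega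
    have := ha₁B ⟨k + j.1, hj⟩
    have hnotlt : ¬ k + j.1 < k := by omega
    simp only [hw, hτ, hnotlt, dif_neg, not_false_iff] at this
    have hjeq : (⟨k + j.1 - k, by omega⟩ : Fin (n - k)) = j := by
      ext; simp
    rwa [hjeq] at this
  -- chase to get exactly inside the x-balls
  obtain ⟨a, haA, hax, haclose⟩ := chase_aux hAc hA (by omega : k + 1 ≤ n) x r hr hd ha₁A
    (by positivity : (0:ℝ) < ε / 8) ha₁x
  refine ⟨a, ⟨⟨haA, Set.mem_iInter.2 fun i => Metric.mem_closedBall.2 (hax i)⟩, ?_⟩⟩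
  refine Set.mem_iInter.2 fun j => Metric.mem_closedBall.2 ?_
  calc dist a (y j) ≤ dist a a₁ + dist a₁ (y j) := dist_triangle _ _ _
    _ ≤ 4 * (ε / 8) + (s j + ε / 8) := add_le_add (by rw [dist_comm]; exact haclose) (ha₁y j)
    _ ≤ s j + ε := by linarith
end

section
/- Let X be a complete metric space, let n ≥ 3, and let A be a closed subset of X that is almost externally n-hyperconvex in X. Then A is externally n-hyperconvex in X. -/
theorem isExternallyNHyperconvex_of_almost (X : Type*) [MetricSpace X] [CompleteSpace X]
    (n : ℕ) (hn : 3 ≤ n) (A : Set X) (hAc : IsClosed A)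
    (h : IsAlmostExternallyNHyperconvex A n) :
    IsExternallyNHyperconvex A n := by
  intro x r hr1 hr2
  have hnpos : 0 < n := by omega
  let J : ℕ → Fin n := fun k => ⟨k % n, Nat.mod_lt k hnpos⟩
  have hJne : ∀ k m, 0 < m → m < n → J (k + m) ≠ J k := by
    intro k m hm1 hm2 hEq
    have hmod : (k + m) % n = k % n := congrArg Fin.val hEq
    have hd : n ∣ (k + m) - k := (Nat.modEq_iff_dvd' (Nat.le_add_right k m)).mp hmod.symm
    have hd' : n ∣ m := by simpa using hd
    exact absurd (Nat.le_of_dvd hm1 hd') (by omega)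
  let Q : ℕ → X → Prop := fun k a => a ∈ A ∧
    (∀ i, dist (x i) a ≤ r i + 49/32 * (4/5 : ℝ)^k) ∧
    dist (x (J k)) a ≤ r (J k) + 1/8 * (4/5 : ℝ)^k ∧
    dist (x (J (k+1))) a ≤ r (J (k+1)) + 101/128 * (4/5 : ℝ)^k
  have key : ∀ k (a : X), Q k a → ∃ b, Q (k+1) b ∧ dist a b ≤ 11/10 * (4/5 : ℝ)^k := by
    intro k a ha
    obtain ⟨haA, hall, hJk, hJk1⟩ := ha
    have hρ : (0:ℝ) < (4/5:ℝ)^k := by positivity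
    set y : Fin n → X := fun i => if i = J k then a else x i with hy
    set s : Fin n → ℝ := fun i => if i = J k then (4/5:ℝ)^k
      else max (r i) (dist (x i) a - (4/5:ℝ)^k) with hs
    have h1 : ∀ i, Metric.infDist (y i) A ≤ s i := by
      intro i
      by_cases hi : i = J k
      · simp only [hy, hs, if_pos hi]
        rw [Metric.infDist_zero_of_mem haA]
        positivity
      · simp only [hy, hs, if_neg hi]
        exact le_trans (hr1 i) (le_max_left _ _)
    have h2 : ∀ i j, dist (y i) (y j) ≤ s i + s j := by
      intro i j
      by_cases hi : i = J k <;> by_cases hj : j = J k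
      · simp only [hy, hs, if_pos hi, if_pos hj, dist_self]
        positivity
      · simp only [hy, hs, if_pos hi, if_neg hj]
        have hm := le_max_right (r j) (dist (x j) a - (4/5:ℝ)^k)
        rw [dist_comm]
        linarith
      · simp only [hy, hs, if_neg hi, if_pos hj]
        have hm := le_max_right (r i) (dist (x i) a - (4/5:ℝ)^k)
        linarith
      · simp only [hy, hs, if_neg hi, if_neg hj]
        calc dist (x i) (x j) ≤ r i + r j := hr2 i j
        _ ≤ _ := add_le_add (le_max_left _ _) (le_max_left _ _)
    obtain ⟨b, hbA, hbB⟩ := h y s h1 h2 (1/10 * (4/5:ℝ)^k) (by positivity)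
    have hball : ∀ i, dist b (y i) ≤ s i + 1/10 * (4/5:ℝ)^k := by
      intro i
      have := Set.mem_iInter.mp hbB i
      rwa [Metric.mem_closedBall] at this
    have hab : dist a b ≤ 11/10 * (4/5:ℝ)^k := by
      have hb := hball (J k)
      simp only [hy, hs, if_pos rfl] at hb
      rw [dist_comm] at hb
      linarith
    have hinc : ∀ i, i ≠ J k →
        dist (x i) b ≤ max (r i) (dist (x i) a - (4/5:ℝ)^k) + 1/10 * (4/5:ℝ)^k := by
      intro i hi
      have hb := hball i
      simp only [hy, hs, if_neg hi] at hb
      rwa [dist_comm] at hb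
    have hpow : (4/5:ℝ)^(k+1) = 4/5 * (4/5:ℝ)^k := by rw [pow_succ]; ring
    have hunif : ∀ i, i ≠ J k → dist (x i) b ≤ r i + 101/128 * (4/5:ℝ)^(k+1) := by
      intro i hi
      have hb1 := hinc i hi
      have hb2 := hall i
      have hmax : max (r i) (dist (x i) a - (4/5:ℝ)^k) ≤ r i + 17/32 * (4/5:ℝ)^k := by
        apply max_le
        · linarith
        · linarith
      rw [hpow]; linarith
    refine ⟨b, ⟨hbA, ?_, ?_, ?_⟩, hab⟩
    · intro i
      by_cases hi : i = J k
      · rw [hi]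
        calc dist (x (J k)) b ≤ dist (x (J k)) a + dist a b := dist_triangle _ _ _
        _ ≤ (r (J k) + 1/8 * (4/5:ℝ)^k) + 11/10 * (4/5:ℝ)^k := add_le_add hJk hab
        _ ≤ r (J k) + 49/32 * (4/5:ℝ)^(k+1) := by rw [hpow]; linarith
      · have hb := hunif i hi
        have hρ' : (0:ℝ) < (4/5:ℝ)^(k+1) := by positivity
        linarith
    · have hne : J (k+1) ≠ J k := hJne k 1 one_pos (by omega)
      have hb1 := hinc _ hne
      have hmax : max (r (J (k+1))) (dist (x (J (k+1))) a - (4/5:ℝ)^k) ≤ r (J (k+1)) := by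
        apply max_le le_rfl
        linarith
      rw [hpow]; linarith
    · have hne : J (k+2) ≠ J k := hJne k 2 (by omega) (by omega)
      exact hunif _ hne
  obtain ⟨a0, ha0A, ha0B⟩ := h x r hr1 hr2 (1/8) (by norm_num)
  have ha0 : ∀ i, dist (x i) a0 ≤ r i + 1/8 := by
    intro i
    have := Set.mem_iInter.mp ha0B i
    rw [Metric.mem_closedBall] at this
    rw [dist_comm]
    linarith
  have hQ0 : Q 0 a0 := by
    refine ⟨ha0A, ?_, ?_, ?_⟩
    · intro i
      have := ha0 i
      norm_num
      linarith
    · have := ha0 (J 0)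
      norm_num
      linarith
    · have := ha0 (J 1)
      norm_num
      linarith
  choose f hf1 hf2 using key
  let u : ∀ k : ℕ, {a : X // Q k a} :=
    fun k => Nat.rec ⟨a0, hQ0⟩ (fun m p => ⟨f m p.1 p.2, hf1 m p.1 p.2⟩) k
  have hu : ∀ k, dist ((u k).1) ((u (k+1)).1) ≤ 11/10 * (4/5:ℝ)^k :=
    fun k => hf2 k (u k).1 (u k).2
  have hcauchy : CauchySeq (fun k => (u k).1) :=
    cauchySeq_of_le_geometric (4/5) (11/10) (by norm_num) hu
  obtain ⟨p, hp⟩ := cauchySeq_tendsto_of_complete hcauchy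
  have hpA : p ∈ A := hAc.mem_of_tendsto hp (Filter.Eventually.of_forall fun k => (u k).2.1)
  have hpd : ∀ i, dist (x i) p ≤ r i := by
    intro i
    have h1 : Filter.Tendsto (fun k => dist (x i) ((u k).1)) Filter.atTop
        (nhds (dist (x i) p)) := Filter.Tendsto.dist tendsto_const_nhds hp
    have h2 : Filter.Tendsto (fun k => r i + 49/32 * (4/5:ℝ)^k) Filter.atTop
        (nhds (r i + 49/32 * 0)) :=
      Filter.Tendsto.const_add _
        ((tendsto_pow_atTop_nhds_zero_of_lt_one (by norm_num) (by norm_num)).const_mul _)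
    have := le_of_tendsto_of_tendsto' h1 h2 (fun k => (u k).2.2.1 i)
    linarith
  exact ⟨p, hpA, Set.mem_iInter.2 fun i => Metric.mem_closedBall.2
    (by rw [dist_comm]; exact hpd i)⟩
end

section
/- Let X be an n-hyperconvex metric space for some integer n ≥ 3. Then the metric completion of X is n-hyperconvex as well. -/
open Metric Function

def IsApproxNHyperconvex (Y : Type*) [PseudoMetricSpace Y] (n : ℕ) : Prop :=
  ∀ (x : Fin n → Y) (r : Fin n → ℝ), (∀ i, 0 ≤ r i) →
    (∀ i j, dist (x i) (x j) ≤ r i + r j) →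
    ∀ δ > 0, ∃ q, ∀ i, dist q (x i) ≤ r i + δ

section

variable {X Y : Type*} [MetricSpace X] [PseudoMetricSpace Y] {n : ℕ}

theorem IsNHyperconvex.isApproxNHyperconvex {e : X → Y} (h : IsNHyperconvex X n)
    (he : Isometry e) (hde : DenseRange e) : IsApproxNHyperconvex Y n := by
  intro x r hr hd δ hδ
  choose y hy using fun i => denseRange_iff.1 hde (x i) (δ / 2) (half_pos hδ)
  have hpair : ∀ i k, dist (y i) (y k) ≤ (r i + δ / 2) + (r k + δ / 2) := fun i k => by
    rw [← he.dist_eq]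
    linarith [dist_triangle4 (e (y i)) (x i) (x k) (e (y k)), hd i k, dist_comm (x i) (e (y i)),
      hy i, hy k]
  obtain ⟨z, hz⟩ := h y (fun i => r i + δ / 2) (fun i => by linarith [hr i]) hpair
  refine ⟨e z, fun i => ?_⟩
  have hzi : dist z (y i) ≤ r i + δ / 2 := mem_closedBall.1 (Set.mem_iInter.1 hz i)
  rw [← he.dist_eq] at hzi
  linarith [dist_triangle (e z) (e (y i)) (x i), dist_comm (x i) (e (y i)), hy i]

namespace IsApproxNHyperconvex

variable {x : Fin n → Y} {r : Fin n → ℝ}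

theorem exists_dist_le_of_omit (h : IsApproxNHyperconvex Y n) (hr : ∀ i, 0 ≤ r i)
    (hd : ∀ i j, dist (x i) (x j) ≤ r i + r j) (p : Y) (j : Fin n) {t δ : ℝ} (ht : 0 ≤ t)
    (hδ : 0 < δ) :
    ∃ q, dist q p ≤ t + δ ∧ ∀ i ≠ j, ∀ σ ≥ 0,
      dist p (x i) ≤ r i + σ + t → dist q (x i) ≤ r i + σ + δ := by
  set R : Fin n → ℝ := update (fun i => max (r i) (dist p (x i) - t)) j t
  have hRj : R j = t := update_self ..
  have hR : ∀ i ≠ j, R i = max (r i) (dist p (x i) - t) := fun i hi => update_of_ne hi ..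
  have hR₀ : ∀ i, 0 ≤ R i := fun i => by
    rcases eq_or_ne i j with rfl | hi
    · rwa [hRj]
    · rw [hR i hi]; exact le_max_of_le_left (hr i)
  have hpair : ∀ i k, dist (update x j p i) (update x j p k) ≤ R i + R k := fun i k => by
    rcases eq_or_ne i j with rfl | hi
    · rcases eq_or_ne k i with rfl | hk
      · simpa [hRj] using add_nonneg ht ht
      rw [update_self, update_of_ne hk, hRj, hR k hk]
      linarith [le_max_right (r k) (dist p (x k) - t)]
    rcases eq_or_ne k j with rfl | hk
    · rw [update_self, update_of_ne hi, hRj, hR i hi, dist_comm]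
      linarith [le_max_right (r i) (dist p (x i) - t)]
    rw [update_of_ne hi, update_of_ne hk, hR i hi, hR k hk]
    linarith [hd i k, le_max_left (r i) (dist p (x i) - t), le_max_left (r k) (dist p (x k) - t)]
  obtain ⟨q, hq⟩ := h (update x j p) R hR₀ hpair δ hδ
  refine ⟨q, by simpa [hRj] using hq j, fun i hi σ hσ hpi => ?_⟩
  have hqi := hq i
  rw [update_of_ne hi, hR i hi] at hqi
  linarith [max_le (by linarith : r i ≤ r i + σ) (by linarith : dist p (x i) - t ≤ r i + σ)]

theorem exists_dist_le_three_quarters (h : IsApproxNHyperconvex Y n) (hn : 3 ≤ n)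
    (hr : ∀ i, 0 ≤ r i) (hd : ∀ i j, dist (x i) (x j) ≤ r i + r j) {s : ℝ} (hs : 0 < s)
    {p : Y} (hp : ∀ i, dist p (x i) ≤ r i + s) :
    ∃ q, dist q p ≤ 2 * s ∧ ∀ i, dist q (x i) ≤ r i + 3 / 4 * s := by
  obtain ⟨a, b, c, hab, hac, hbc⟩ : ∃ a b c : Fin n, a ≠ b ∧ a ≠ c ∧ b ≠ c :=
    ⟨⟨0, by omega⟩, ⟨1, by omega⟩, ⟨2, by omega⟩, by simp [Fin.ext_iff]⟩
  set δ := s / 12 with hδs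
  have hδ : 0 < δ := by positivity
  have ht : 0 ≤ s / 2 := by positivity
  obtain ⟨p₁, hp₁p, hp₁⟩ := h.exists_dist_le_of_omit hr hd p a ht hδ
  have h₁a : dist p₁ (x a) ≤ r a + 3 / 2 * s + δ := by
    linarith [dist_triangle p₁ p (x a), hp a]
  have h₁ : ∀ i ≠ a, dist p₁ (x i) ≤ r i + s / 2 + δ := fun i hi =>
    hp₁ i hi _ ht (by linarith [hp i])
  obtain ⟨p₂, hp₂p, hp₂⟩ := h.exists_dist_le_of_omit hr hd p₁ b ht hδ
  have h₂ : ∀ i, i ≠ a → i ≠ b → dist p₂ (x i) ≤ r i + δ + δ := fun i hia hib =>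
    hp₂ i hib δ hδ.le (by linarith [h₁ i hia])
  have h₂' : ∀ i, dist p₂ (x i) ≤ r i + s + 2 * δ := fun i => by
    by_cases hia : i = a
    · subst hia
      linarith [hp₂ i hab (s + δ) (by positivity) (by linarith)]
    by_cases hib : i = b
    · subst hib
      linarith [dist_triangle p₂ p₁ (x i), h₁ i hia]
    linarith [h₂ i hia hib]
  obtain ⟨p₃, hp₃p, hp₃⟩ := h.exists_dist_le_of_omit hr hd p₂ c ht hδ
  refine ⟨p₃, ?_, fun i => ?_⟩
  · linarith [dist_triangle4 p₃ p₂ p₁ p]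
  by_cases hic : i = c
  · subst hic
    linarith [dist_triangle p₃ p₂ (x i), h₂ i hac.symm hbc.symm]
  linarith [hp₃ i hic (s / 2 + 2 * δ) (by positivity) (by linarith [h₂' i])]

end IsApproxNHyperconvex

theorem exists_forall_dist_le_of_forall_exists_dist_le {ι : Type*} [CompleteSpace Y]
    {x : ι → Y} {r : ι → ℝ} {c C : ℝ} (hc₀ : 0 < c) (hc₁ : c < 1)
    (hstep : ∀ s > 0, ∀ p, (∀ i, dist p (x i) ≤ r i + s) →
      ∃ q, dist q p ≤ C * s ∧ ∀ i, dist q (x i) ≤ r i + c * s)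
    {s₀ : ℝ} (hs₀ : 0 < s₀) {p₀ : Y} (hp₀ : ∀ i, dist p₀ (x i) ≤ r i + s₀) :
    ∃ q, ∀ i, dist q (x i) ≤ r i := by
  have : Nonempty Y := ⟨p₀⟩
  choose! g hg using hstep
  let u : ℕ → Y := fun k => Nat.rec p₀ (fun k p => g (s₀ * c ^ k) p) k
  have hu : ∀ k i, dist (u k) (x i) ≤ r i + s₀ * c ^ k := by
    intro k
    induction k with
    | zero => simpa [u] using hp₀
    | succ k ih =>
      intro i
      rw [pow_succ, ← mul_assoc, mul_comm _ c]
      exact (hg _ (by positivity) _ ih).2 i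
  have hmove : ∀ k, dist (u k) (u (k + 1)) ≤ C * s₀ * c ^ k := fun k => by
    rw [dist_comm, mul_assoc]
    exact (hg _ (by positivity) _ (hu k)).1
  obtain ⟨q, hq⟩ := cauchySeq_tendsto_of_complete (cauchySeq_of_le_geometric c _ hc₁ hmove)
  refine ⟨q, fun i => le_of_tendsto_of_tendsto' (hq.dist tendsto_const_nhds) ?_ (hu · i)⟩
  simpa using ((tendsto_pow_atTop_nhds_zero_of_lt_one hc₀.le hc₁).const_mul s₀).const_add (r i)

end

theorem isNHyperconvex_completion (X : Type*) [MetricSpace X] (n : ℕ) (hn : 3 ≤ n)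
    (h : IsNHyperconvex X n) : IsNHyperconvex (UniformSpace.Completion X) n := by
  intro x r hr hd
  have happrox : IsApproxNHyperconvex (UniformSpace.Completion X) n :=
    h.isApproxNHyperconvex UniformSpace.Completion.coe_isometry
      UniformSpace.Completion.denseRange_coe
  obtain ⟨p₀, hp₀⟩ := happrox x r hr hd 1 one_pos
  obtain ⟨q, hq⟩ := exists_forall_dist_le_of_forall_exists_dist_le (by norm_num) (by norm_num)
    (fun s hs p hp => happrox.exists_dist_le_three_quarters hn hr hd hs hp) one_pos hp₀
  exact ⟨q, Set.mem_iInter.2 fun i => mem_closedBall.2 (hq i)⟩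
end

section
/- The subspace c_0 of all real null sequences (sequences converging to 0) is externally 2-hyperconvex in the space ℓ∞(ℕ) of bounded real sequences equipped with the supremum metric. -/
set_option synthInstance.maxHeartbeats 400000

open Filter

/-- `c₀`, the set of null sequences, viewed as a subset of `ℓ∞(ℕ)`. -/
def cZero : Set (lp (fun _ : ℕ => ℝ) ⊤) :=
  {x | Tendsto (fun n => x n) atTop (nhds 0)}

lemma cZero_nonempty : cZero.Nonempty :=
  ⟨0, by simp [cZero]⟩

/-- From `infDist x c₀ ≤ r` we get `|x n| ≤ r + ε` eventually, for every `ε > 0`. -/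
lemma eventually_abs_le {x : lp (fun _ : ℕ => ℝ) ⊤} {r : ℝ}
    (hx : Metric.infDist x cZero ≤ r) {ε : ℝ} (hε : 0 < ε) :
    ∀ᶠ n in atTop, |x n| ≤ r + ε := by
  have hlt : Metric.infDist x cZero < r + ε / 2 := lt_of_le_of_lt hx (by linarith)
  obtain ⟨y, hy, hdy⟩ := (Metric.infDist_lt_iff cZero_nonempty).1 hlt
  have hy' : Tendsto (fun n => y n) atTop (nhds 0) := hy
  have hev := (Metric.tendsto_nhds.1 hy') (ε / 2) (by linarith)
  filter_upwards [hev] with n hn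
  have hxy : |x n - y n| ≤ dist x y := by
    have := lp.norm_apply_le_norm ENNReal.top_ne_zero (x - y) n
    simpa [dist_eq_norm, Real.norm_eq_abs] using this
  have : |x n| ≤ |x n - y n| + |y n| := by
    calc |x n| = |(x n - y n) + y n| := by ring_nf
    _ ≤ |x n - y n| + |y n| := abs_add_le _ _
  have hyn : |y n| ≤ ε / 2 := by
    simpa [Real.dist_eq] using hn.le
  linarith

/-- `c₀` is externally `2`-hyperconvex in `ℓ∞(ℕ)`: for any two closed balls
`B(x₁,r₁)`, `B(x₂,r₂)` with `d(xᵢ, c₀) ≤ rᵢ` and `d(x₁,x₂) ≤ r₁ + r₂`, the set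
`c₀ ∩ B(x₁,r₁) ∩ B(x₂,r₂)` is nonempty. -/
theorem cZero_externally_two_hyperconvex
    (x₁ x₂ : lp (fun _ : ℕ => ℝ) ⊤) (r₁ r₂ : ℝ)
    (h₁ : Metric.infDist x₁ cZero ≤ r₁) (h₂ : Metric.infDist x₂ cZero ≤ r₂)
    (h : dist x₁ x₂ ≤ r₁ + r₂) :
    (cZero ∩ Metric.closedBall x₁ r₁ ∩ Metric.closedBall x₂ r₂).Nonempty := by
  have hr₁ : 0 ≤ r₁ := le_trans Metric.infDist_nonneg h₁
  have hr₂ : 0 ≤ r₂ := le_trans Metric.infDist_nonneg h₂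
  set L : ℕ → ℝ := fun n => max (x₁ n - r₁) (x₂ n - r₂) with hL
  set U : ℕ → ℝ := fun n => min (x₁ n + r₁) (x₂ n + r₂) with hU
  have hdiff : ∀ n, |x₁ n - x₂ n| ≤ r₁ + r₂ := by
    intro n
    have := lp.norm_apply_le_norm ENNReal.top_ne_zero (x₁ - x₂) n
    have h' : ‖x₁ - x₂‖ = dist x₁ x₂ := (dist_eq_norm _ _).symm
    simp only [lp.coeFn_sub, Pi.sub_apply, Real.norm_eq_abs] at this
    linarith [this, h, h'.le, h'.ge]
  have hLU : ∀ n, L n ≤ U n := by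
    intro n
    have hd := abs_le.1 (hdiff n)
    simp only [hL, hU, max_le_iff, le_min_iff]
    refine ⟨⟨by linarith, by linarith [hd.1]⟩, ⟨by linarith [hd.2], by linarith⟩⟩
  set z : ℕ → ℝ := fun n => max (L n) (min 0 (U n)) with hz
  have hzL : ∀ n, L n ≤ z n := fun n => le_max_left _ _
  have hzU : ∀ n, z n ≤ U n := fun n =>
    max_le (hLU n) (min_le_right _ _)
  have hz₁ : ∀ n, |z n - x₁ n| ≤ r₁ := by
    intro n
    rw [abs_le]
    constructor
    · have := (le_max_left (x₁ n - r₁) (x₂ n - r₂)).trans (hzL n)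
      linarith
    · have := (hzU n).trans (min_le_left (x₁ n + r₁) (x₂ n + r₂))
      linarith
  have hz₂ : ∀ n, |z n - x₂ n| ≤ r₂ := by
    intro n
    rw [abs_le]
    constructor
    · have := (le_max_right (x₁ n - r₁) (x₂ n - r₂)).trans (hzL n)
      linarith
    · have := (hzU n).trans (min_le_right (x₁ n + r₁) (x₂ n + r₂))
      linarith
  -- z is bounded
  have hmem : Memℓp z ⊤ := by
    apply memℓp_infty
    refine ⟨‖x₁‖ + r₁, ?_⟩
    rintro _ ⟨n, rfl⟩
    have hx : |x₁ n| ≤ ‖x₁‖ := by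
      simpa [Real.norm_eq_abs] using lp.norm_apply_le_norm ENNReal.top_ne_zero x₁ n
    have := abs_le.1 (hz₁ n)
    rw [abs_le] at hx
    simp only [Real.norm_eq_abs]
    rw [abs_le]
    constructor <;> linarith [this.1, this.2, hx.1, hx.2]
  set Z : lp (fun _ : ℕ => ℝ) ⊤ := ⟨z, hmem⟩ with hZ
  have hZapp : ∀ n, Z n = z n := fun n => rfl
  -- z tends to 0
  have hz0 : Tendsto (fun n => z n) atTop (nhds 0) := by
    rw [Metric.tendsto_nhds]
    intro ε hε
    filter_upwards [eventually_abs_le h₁ (half_pos hε), eventually_abs_le h₂ (half_pos hε)]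
      with n hn₁ hn₂
    have hab₁ := abs_le.1 hn₁
    have hab₂ := abs_le.1 hn₂
    have hLle : L n ≤ ε / 2 := max_le (by linarith [hab₁.2]) (by linarith [hab₂.2])
    have hUge : -(ε / 2) ≤ U n := le_min (by linarith [hab₁.1]) (by linarith [hab₂.1])
    have h1 : z n ≤ ε / 2 := max_le hLle (le_trans (min_le_left _ _) (by linarith))
    have h2 : -(ε / 2) ≤ z n :=
      le_trans (le_min (by linarith) hUge) (le_max_right _ _)
    rw [Real.dist_eq, sub_zero, abs_lt]
    constructor <;> linarith
  refine ⟨Z, ⟨?_, ?_⟩, ?_⟩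
  · simpa [cZero, hZapp] using hz0
  · rw [Metric.mem_closedBall, dist_eq_norm]
    apply lp.norm_le_of_forall_le hr₁
    intro n
    simpa [Real.norm_eq_abs, hZapp] using hz₁ n
  · rw [Metric.mem_closedBall, dist_eq_norm]
    apply lp.norm_le_of_forall_le hr₂
    intro n
    simpa [Real.norm_eq_abs, hZapp] using hz₂ n
end

section
/- Suppose X is a metric space with a geodesic bicombing σ such that every geodesic σ_{xy} is a straight curve. Let E ⊂ X be externally 2-hyperconvex in X. Then E is σ-convex. -/
/-- A geodesic bicombing on a metric space `X`: a choice `σ x y : ℝ → X` (relevant on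
`[0,1]`) of constant-speed geodesics from `x` to `y`, symmetric under swapping endpoints,
satisfying the weak convexity estimate
`d(σ x y t, σ x' y' t) ≤ (1-t) d(x,x') + t d(y,y')`. -/
structure GeodesicBicombing (X : Type*) [MetricSpace X] where
  map : X → X → ℝ → X
  source : ∀ x y, map x y 0 = x
  target : ∀ x y, map x y 1 = y
  geodesic : ∀ x y, ∀ s ∈ Set.Icc (0 : ℝ) 1, ∀ t ∈ Set.Icc (0 : ℝ) 1,
    dist (map x y s) (map x y t) = |s - t| * dist x y
  symm : ∀ x y, ∀ t ∈ Set.Icc (0 : ℝ) 1, map y x t = map x y (1 - t)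
  weak_conv : ∀ x y x' y', ∀ t ∈ Set.Icc (0 : ℝ) 1,
    dist (map x y t) (map x' y' t) ≤ (1 - t) * dist x x' + t * dist y y'

/-- A curve `γ : [0,1] → X` is straight if `t ↦ d(z, γ t)` is convex on `[0,1]` for every
`z ∈ X`. -/
def IsStraight {X : Type*} [MetricSpace X] (γ : ℝ → X) : Prop :=
  ∀ z : X, ConvexOn ℝ (Set.Icc (0 : ℝ) 1) (fun t => dist z (γ t))

/-- A subset `A` is `σ`-convex if `σ x y ([0,1]) ⊆ A` for all `x, y ∈ A`. -/
def SigmaConvex {X : Type*} [MetricSpace X] (σ : GeodesicBicombing X) (A : Set X) : Prop :=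
  ∀ x ∈ A, ∀ y ∈ A, ∀ t ∈ Set.Icc (0 : ℝ) 1, σ.map x y t ∈ A

/-- A subset `A` of a metric space `X` is externally `2`-hyperconvex in `X` if for every
two closed balls `B(x₁,r₁)`, `B(x₂,r₂)` with `d(xᵢ,A) ≤ rᵢ` and `d(x₁,x₂) ≤ r₁ + r₂`, the
set `A ∩ B(x₁,r₁) ∩ B(x₂,r₂)` is nonempty. -/
def IsExternallyTwoHyperconvex {X : Type*} [MetricSpace X] (A : Set X) : Prop :=
  ∀ (x₁ x₂ : X) (r₁ r₂ : ℝ),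
    Metric.infDist x₁ A ≤ r₁ → Metric.infDist x₂ A ≤ r₂ → dist x₁ x₂ ≤ r₁ + r₂ →
    (A ∩ Metric.closedBall x₁ r₁ ∩ Metric.closedBall x₂ r₂).Nonempty

/-!
Let `f t` be the distance from `σ x y t` to `E`, for `x, y ∈ E` at distance `d`.
External 2-hyperconvexity applied to the balls around `σ x y s` and `σ x y u` with radii
`f s + ρ`, `f u + ρ` (`ρ` just large enough for the balls to meet) yields a point `q ∈ E`, and
straightness of `σ x y` bounds `d(q, σ x y ((s+u)/2))`, so that
`2 f((s+u)/2) ≤ max (f s + f u) ((u - s) d)`.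
If the maximum `M` of `f` were positive, then at the least maximiser `a` this inequality with
`s, u = a ∓ M/(2d)` would force `f (a - M/(2d)) = M`, contradicting minimality of `a`.
-/

open Metric Set

section MidpointInequality

variable {f : ℝ → ℝ} {d : ℝ}
  (h_left : ∀ s ∈ Icc (0 : ℝ) 1, f s ≤ s * d)
  (h_right : ∀ s ∈ Icc (0 : ℝ) 1, f s ≤ (1 - s) * d)
  (h_mid : ∀ s ∈ Icc (0 : ℝ) 1, ∀ u ∈ Icc (0 : ℝ) 1, s ≤ u →
    2 * f ((s + u) / 2) ≤ max (f s + f u) ((u - s) * d))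
include h_left h_right h_mid

theorem exists_lt_eq_of_isMaxOn_of_midpoint_le {a : ℝ} (ha : a ∈ Icc (0 : ℝ) 1)
    (hmax : IsMaxOn f (Icc 0 1) a) (hpos : 0 < f a) :
    ∃ s ∈ Icc (0 : ℝ) 1, s < a ∧ f s = f a := by
  set M := f a
  set ε := M / (2 * d)
  have hd : 0 < d := pos_of_mul_pos_right (hpos.trans_le (h_left a ha)) ha.1
  have hε : 0 < ε := by positivity
  have hεd : 2 * ε * d = M := by simp only [ε]; field_simp
  have h_lo : 2 * ε ≤ a := by nlinarith [h_left a ha]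
  have h_hi : 2 * ε ≤ 1 - a := by nlinarith [h_right a ha]
  have hs : a - ε ∈ Icc (0 : ℝ) 1 := ⟨by linarith, by linarith⟩
  have hu : a + ε ∈ Icc (0 : ℝ) 1 := ⟨by linarith, by linarith⟩
  have key := h_mid _ hs _ hu (by linarith)
  rw [show (a - ε + (a + ε)) / 2 = a by ring, show (a + ε - (a - ε)) * d = M by linarith] at key
  have hfs : f (a - ε) ≤ M := hmax hs
  have hfu : f (a + ε) ≤ M := hmax hu
  refine ⟨a - ε, hs, by linarith, le_antisymm hfs ?_⟩
  rcases max_cases (f (a - ε) + f (a + ε)) M with ⟨h, _⟩ | ⟨h, _⟩ <;> rw [h] at key <;> linarith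

theorem nonpos_of_midpoint_le (hf : ContinuousOn f (Icc 0 1)) :
    ∀ t ∈ Icc (0 : ℝ) 1, f t ≤ 0 := by
  obtain ⟨c, hc, hmax⟩ := isCompact_Icc.exists_isMaxOn (nonempty_Icc.2 zero_le_one) hf
  by_contra! ⟨t, ht, hft⟩
  set S := Icc (0 : ℝ) 1 ∩ f ⁻¹' {f c}
  have hS : IsCompact S :=
    isCompact_Icc.of_isClosed_subset
      (hf.preimage_isClosed_of_isClosed isClosed_Icc isClosed_singleton) inter_subset_left
  obtain ⟨a, ⟨ha, hfa : f a = f c⟩, ha_least⟩ := hS.exists_isLeast ⟨c, hc, rfl⟩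
  have hmax_a : IsMaxOn f (Icc 0 1) a := fun s hs => (hmax hs).trans_eq hfa.symm
  have hpos : 0 < f a := hfa ▸ hft.trans_le (hmax ht)
  obtain ⟨s, hs, hsa, hfs⟩ :=
    exists_lt_eq_of_isMaxOn_of_midpoint_le h_left h_right h_mid ha hmax_a hpos
  exact (ha_least ⟨hs, hfs.trans hfa⟩).not_gt hsa

end MidpointInequality

section MetricSpace

variable {X : Type*} [MetricSpace X]

theorem IsStraight.dist_midpoint_le {γ : ℝ → X} (hγ : IsStraight γ) (z : X) {s u : ℝ}
    (hs : s ∈ Icc (0 : ℝ) 1) (hu : u ∈ Icc (0 : ℝ) 1) :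
    dist z (γ ((s + u) / 2)) ≤ (dist z (γ s) + dist z (γ u)) / 2 := by
  have h := (hγ z).2 hs hu (by norm_num : (0 : ℝ) ≤ 1 / 2) (by norm_num : (0 : ℝ) ≤ 1 / 2)
    (by norm_num)
  simp only [smul_eq_mul] at h
  rw [show (s + u) / 2 = 1 / 2 * s + 1 / 2 * u by ring]
  linarith

namespace IsExternallyTwoHyperconvex

variable {A : Set X} (hA : IsExternallyTwoHyperconvex A)
include hA

theorem mem_of_infDist_eq_zero {p : X} (hp : infDist p A = 0) : p ∈ A := by
  obtain ⟨q, ⟨hqA, hq⟩, -⟩ := hA p p 0 0 hp.le hp.le (by simp)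
  rwa [← dist_le_zero.1 (mem_closedBall.1 hq)]

theorem exists_mem_dist_add_dist_le (x₁ x₂ : X) :
    ∃ q ∈ A, dist x₁ q + dist x₂ q ≤ max (infDist x₁ A + infDist x₂ A) (dist x₁ x₂) := by
  set ρ := max 0 ((dist x₁ x₂ - infDist x₁ A - infDist x₂ A) / 2) with hρ_def
  have hρ : 0 ≤ ρ := le_max_left _ _
  have hρ_eq : infDist x₁ A + infDist x₂ A + 2 * ρ =
      max (infDist x₁ A + infDist x₂ A) (dist x₁ x₂) := by
    rw [hρ_def, mul_max_of_nonneg _ _ zero_le_two, ← max_add_add_left]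
    congr 1 <;> ring
  obtain ⟨q, ⟨hqA, hq₁⟩, hq₂⟩ := hA x₁ x₂ (infDist x₁ A + ρ) (infDist x₂ A + ρ)
    (le_add_of_nonneg_right hρ) (le_add_of_nonneg_right hρ)
    (by linarith [le_max_right (infDist x₁ A + infDist x₂ A) (dist x₁ x₂)])
  rw [mem_closedBall, dist_comm] at hq₁ hq₂
  exact ⟨q, hqA, by linarith⟩

theorem two_mul_infDist_midpoint_le {γ : ℝ → X} (hγ : IsStraight γ) {s u : ℝ}
    (hs : s ∈ Icc (0 : ℝ) 1) (hu : u ∈ Icc (0 : ℝ) 1) :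
    2 * infDist (γ ((s + u) / 2)) A ≤
      max (infDist (γ s) A + infDist (γ u) A) (dist (γ s) (γ u)) := by
  obtain ⟨q, hqA, hq⟩ := hA.exists_mem_dist_add_dist_le (γ s) (γ u)
  have hmid := hγ.dist_midpoint_le q hs hu
  rw [dist_comm q, dist_comm q, dist_comm q] at hmid
  linarith [infDist_le_dist_of_mem (x := γ ((s + u) / 2)) hqA]

end IsExternallyTwoHyperconvex

namespace GeodesicBicombing

variable (σ : GeodesicBicombing X) (x y : X)

theorem dist_map_source {s : ℝ} (hs : s ∈ Icc (0 : ℝ) 1) :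
    dist (σ.map x y s) x = s * dist x y := by
  simpa [σ.source, abs_of_nonneg hs.1] using σ.geodesic x y s hs 0 (left_mem_Icc.2 zero_le_one)

theorem dist_map_target {s : ℝ} (hs : s ∈ Icc (0 : ℝ) 1) :
    dist (σ.map x y s) y = (1 - s) * dist x y := by
  have h := σ.geodesic x y s hs 1 (right_mem_Icc.2 zero_le_one)
  rwa [σ.target, abs_sub_comm, abs_of_nonneg (sub_nonneg.2 hs.2)] at h

theorem lipschitzOnWith_map : LipschitzOnWith (nndist x y) (σ.map x y) (Icc 0 1) := by
  refine LipschitzOnWith.of_dist_le_mul fun s hs u hu => ?_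
  rw [σ.geodesic x y s hs u hu, coe_nndist, Real.dist_eq, mul_comm]

end GeodesicBicombing

end MetricSpace

theorem sigmaConvex_of_externallyTwoHyperconvex (X : Type*) [MetricSpace X]
    (σ : GeodesicBicombing X) (hσ : ∀ x y, IsStraight (σ.map x y))
    (E : Set X) (hE : IsExternallyTwoHyperconvex E) :
    SigmaConvex σ E := by
  intro x hx y hy t ht
  refine hE.mem_of_infDist_eq_zero (le_antisymm ?_ infDist_nonneg)
  refine nonpos_of_midpoint_le (f := fun s => infDist (σ.map x y s) E) (d := dist x y)
    (fun s hs => (infDist_le_dist_of_mem hx).trans_eq (σ.dist_map_source x y hs))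
    (fun s hs => (infDist_le_dist_of_mem hy).trans_eq (σ.dist_map_target x y hs))
    (fun s hs u hu hsu => ?_)
    ((continuous_infDist_pt E).comp_continuousOn (σ.lipschitzOnWith_map x y).continuousOn) t ht
  have hdist := σ.geodesic x y s hs u hu
  rw [abs_sub_comm, abs_of_nonneg (sub_nonneg.2 hsu)] at hdist
  simpa only [hdist] using hE.two_mul_infDist_midpoint_le (hσ x y) hs hu
end

section
/- Let X be a hyperconvex metric space and let A ⊂ X be a nonempty subset. Then A is externally hyperconvex in X if and only if there exists a proximinal 1-Lipschitz retraction ρ : X → A satisfying d(ρ(x),y) ≤ max{ d(x,y), d(A,y) } for all x, y ∈ X. -/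
/-- A metric space `X` is hyperconvex if every family of closed balls (given as a set of
center–radius pairs) which pairwise satisfy `d(x,x') ≤ r + r'` has nonempty
intersection. -/
def IsHyperconvex (X : Type*) [MetricSpace X] : Prop :=
  ∀ S : Set (X × ℝ), (∀ p ∈ S, ∀ q ∈ S, dist p.1 q.1 ≤ p.2 + q.2) →
    (⋂ p ∈ S, Metric.closedBall p.1 p.2).Nonempty

/-- `A` is externally hyperconvex in `X`: every family of closed balls with
`d(center, A) ≤ radius`, pairwise satisfying `d(p.1,q.1) ≤ p.2 + q.2`, intersects `A`. -/
def IsExternallyHyperconvex {X : Type*} [MetricSpace X] (A : Set X) : Prop :=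
  ∀ S : Set (X × ℝ),
    (∀ p ∈ S, Metric.infDist p.1 A ≤ p.2) →
    (∀ p ∈ S, ∀ q ∈ S, dist p.1 q.1 ≤ p.2 + q.2) →
    (A ∩ ⋂ p ∈ S, Metric.closedBall p.1 p.2).Nonempty

/-- A nonempty subset `A` of a hyperconvex metric space `X` is externally hyperconvex if
and only if there is a proximinal `1`-Lipschitz retraction `ρ : X → A` such that
`d(ρ x, y) ≤ max (d x y) (d A y)` for all `x, y ∈ X`. -/
theorem isExternallyHyperconvex_iff_retraction (X : Type*) [MetricSpace X]
    (hX : IsHyperconvex X) (A : Set X) (hA : A.Nonempty) :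
    IsExternallyHyperconvex A ↔
      ∃ ρ : X → X, (∀ x, ρ x ∈ A) ∧ (∀ a ∈ A, ρ a = a) ∧ LipschitzWith 1 ρ ∧
        (∀ x, dist x (ρ x) = Metric.infDist x A) ∧
        (∀ x y, dist (ρ x) y ≤ max (dist x y) (Metric.infDist y A)) := by
  constructor
  · intro hEH
    -- The collection of "good" partial retraction graphs.
    set 𝒮 : Set (Set (X × X)) := {G |
      (∀ p ∈ G, p.2 ∈ A ∧ dist p.1 p.2 = Metric.infDist p.1 A ∧
        ∀ z, dist p.2 z ≤ max (dist p.1 z) (Metric.infDist z A)) ∧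
      ∀ p ∈ G, ∀ q ∈ G, dist p.2 q.2 ≤ dist p.1 q.1} with h𝒮
    have hG₀ : (fun a => (a, a)) '' A ∈ 𝒮 := by
      constructor
      · rintro p ⟨a, ha, rfl⟩
        refine ⟨ha, ?_, fun z => le_max_left _ _⟩
        simp [Metric.infDist_zero_of_mem ha]
      · rintro p ⟨a, _, rfl⟩ q ⟨b, _, rfl⟩
        exact le_rfl
    obtain ⟨M, -, hMmem, hMmax⟩ :
        ∃ M, (fun a => (a, a)) '' A ⊆ M ∧ M ∈ 𝒮 ∧ ∀ G ∈ 𝒮, M ⊆ G → G ⊆ M := by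
      obtain ⟨M, hM₀, hM⟩ := zorn_subset_nonempty 𝒮 (fun c hc hchain hcne => by
        obtain ⟨G₁, hG₁⟩ := hcne
        refine ⟨⋃₀ c, ⟨?_, ?_⟩, fun s hs => Set.subset_sUnion_of_mem hs⟩
        · rintro p ⟨G, hG, hpG⟩
          exact (hc hG).1 p hpG
        · rintro p ⟨G, hG, hpG⟩ q ⟨G', hG', hqG'⟩
          rcases hchain.total hG hG' with h | h
          · exact (hc hG').2 p (h hpG) q hqG'
          · exact (hc hG).2 p hpG q (h hqG')) _ hG₀
      exact ⟨M, hM₀, hM.prop, fun G hG hMG => hM.eq_of_subset hG hMG ▸ Set.Subset.rfl⟩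
    -- Every point is in the domain of the maximal good graph.
    have hdom : ∀ x : X, ∃ y, (x, y) ∈ M := by
      intro x
      by_contra hx
      push_neg at hx
      set S : Set (X × ℝ) :=
        (fun p : X × X => (p.2, dist x p.1)) '' M ∪
          Set.range (fun w => (w, max (dist x w) (Metric.infDist w A))) with hS
      have h1 : ∀ p ∈ S, Metric.infDist p.1 A ≤ p.2 := by
        rintro p (⟨q, hq, rfl⟩ | ⟨w, rfl⟩)
        · simp [Metric.infDist_zero_of_mem ((hMmem.1 q hq).1), dist_nonneg]
        · exact le_max_right _ _
      have key : ∀ q ∈ M, ∀ w : X,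
          dist q.2 w ≤ dist x q.1 + max (dist x w) (Metric.infDist w A) := by
        intro q hq w
        calc dist q.2 w ≤ max (dist q.1 w) (Metric.infDist w A) :=
              (hMmem.1 q hq).2.2 w
          _ ≤ dist x q.1 + max (dist x w) (Metric.infDist w A) := by
              apply max_le
              · calc dist q.1 w ≤ dist q.1 x + dist x w := dist_triangle _ _ _
                  _ ≤ dist x q.1 + max (dist x w) (Metric.infDist w A) :=
                      add_le_add (le_of_eq (dist_comm _ _)) (le_max_left _ _)
              · exact (le_max_right _ _).trans (le_add_of_nonneg_left dist_nonneg)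
      have h2 : ∀ p ∈ S, ∀ q ∈ S, dist p.1 q.1 ≤ p.2 + q.2 := by
        rintro p (⟨q, hq, rfl⟩ | ⟨w, rfl⟩) p' (⟨q', hq', rfl⟩ | ⟨w', rfl⟩)
        · calc dist q.2 q'.2 ≤ dist q.1 q'.1 := hMmem.2 q hq q' hq'
            _ ≤ dist x q.1 + dist x q'.1 := dist_triangle_left _ _ _
        · exact key q hq w'
        · rw [dist_comm]
          exact (key q' hq' w).trans_eq (add_comm _ _)
        · calc dist w w' ≤ dist w x + dist x w' := dist_triangle _ _ _
            _ ≤ max (dist x w) (Metric.infDist w A) +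
                max (dist x w') (Metric.infDist w' A) := by
                gcongr
                · rw [dist_comm]; exact le_max_left _ _
                · exact le_max_left _ _
      obtain ⟨b, hbA, hb⟩ := hEH S h1 h2
      rw [Set.mem_iInter₂] at hb
      have hb1 : ∀ q ∈ M, dist b q.2 ≤ dist x q.1 := fun q hq => by
        simpa using hb _ (Or.inl ⟨q, hq, rfl⟩)
      have hb2 : ∀ w, dist b w ≤ max (dist x w) (Metric.infDist w A) := fun w => by
        simpa using hb _ (Or.inr ⟨w, rfl⟩)
      have hxb : dist x b = Metric.infDist x A := by
        refine le_antisymm ?_ (Metric.infDist_le_dist_of_mem hbA)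
        have := hb2 x
        rw [dist_comm]
        simpa [le_max_iff, Metric.infDist_nonneg, dist_nonneg] using this
      have hM' : insert (x, b) M ∈ 𝒮 := by
        constructor
        · rintro p (rfl | hp)
          · exact ⟨hbA, hxb, fun z => hb2 z⟩
          · exact hMmem.1 p hp
        · rintro p (rfl | hp) q (rfl | hq)
          · simp
          · exact hb1 q hq
          · rw [dist_comm, dist_comm p.1 x]; exact hb1 p hp
          · exact hMmem.2 p hp q hq
      exact hx b (hMmax _ hM' (Set.subset_insert _ _) (Set.mem_insert _ _))
    choose ρ hρ using hdom
    have hρA : ∀ x, ρ x ∈ A := fun x => (hMmem.1 _ (hρ x)).1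
    have hprox : ∀ x, dist x (ρ x) = Metric.infDist x A :=
      fun x => (hMmem.1 _ (hρ x)).2.1
    have hmax : ∀ x y, dist (ρ x) y ≤ max (dist x y) (Metric.infDist y A) :=
      fun x y => (hMmem.1 _ (hρ x)).2.2 y
    refine ⟨ρ, hρA, ?_, ?_, hprox, hmax⟩
    · intro a ha
      have := hprox a
      rw [Metric.infDist_zero_of_mem ha] at this
      exact (dist_eq_zero.mp this).symm
    · refine LipschitzWith.of_dist_le_mul fun x y => ?_
      simpa using hMmem.2 _ (hρ x) _ (hρ y)
  · rintro ⟨ρ, hρA, hρid, hlip, hprox, hmax⟩ S h1 h2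
    obtain ⟨z, hz⟩ := hX S h2
    rw [Set.mem_iInter₂] at hz
    refine ⟨ρ z, hρA z, ?_⟩
    rw [Set.mem_iInter₂]
    intro p hp
    have hzp : dist z p.1 ≤ p.2 := by simpa using hz p hp
    rw [Metric.mem_closedBall]
    exact (hmax z p.1).trans (max_le hzp (h1 p hp))
end
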